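/- arXiv:2511.01616 — 7 statements merged into one kernel-verified Lean document; each statement's English description precedes it below -/
import Mathlib

section
/- Let g: ℝ → ℝ be 2π-periodic, bounded and measurable, and suppose there exist real numbers g₀⁺ and g₀⁻ with lim_{t→0⁺} g(t) = g₀⁺ and lim_{t→0⁻} g(t) = g₀⁻. Let u(θ,r) = (1/(2π)) ∫₀^{2π} K(θ−θ′, r) g(θ′) dθ′ for 0 ≤ r < 1. Let ε ∈ (0,1), let θ: (1−ε, 1] → (−π/2, π/2) be continuously differentiable with θ(1) = 0, and suppose there is σ ∈ {−1, 1} such that σ·θ(r) > 0 for all r ∈ (1−ε, 1). Then lim_{r→1⁻} u(θ(r), r) = ½(g₀⁺ + g₀⁻) + σ (g₀⁺ − g₀⁻) (1/π) arccos((1 + θ′(1)²)^{−1/2}), where θ′(1) is the (one-sided) derivative of the curve at r = 1. -/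
open Real MeasureTheory Set Filter Topology

/-- The Poisson kernel on the unit disc. -/
noncomputable def K (ψ r : ℝ) : ℝ := (1 - r^2) / (1 - 2*r*Real.cos ψ + r^2)

lemma Kdenom_pos {r : ℝ} (h0 : 0 ≤ r) (h1 : r < 1) (ψ : ℝ) :
    0 < 1 - 2*r*Real.cos ψ + r^2 := by
  nlinarith [Real.cos_le_one ψ, sq_nonneg (1 - r)]

lemma K_nonneg {r : ℝ} (h0 : 0 ≤ r) (h1 : r < 1) (ψ : ℝ) : 0 ≤ K ψ r := by
  have := Kdenom_pos h0 h1 ψ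
  have h2 : 0 ≤ 1 - r^2 := by nlinarith
  exact div_nonneg h2 this.le

lemma one_sub_mul_cos_pos {r : ℝ} (h0 : 0 ≤ r) (h1 : r < 1) (ψ : ℝ) :
    0 < 1 - r * Real.cos ψ := by
  nlinarith [Real.cos_le_one ψ]

lemma K_continuous {r : ℝ} (h0 : 0 ≤ r) (h1 : r < 1) (θ : ℝ) :
    Continuous (fun t : ℝ => K (θ - t) r) := by
  apply Continuous.div continuous_const
  · fun_prop
  · intro t
    exact (Kdenom_pos h0 h1 (θ - t)).ne'

lemma hasDerivAt_G {r : ℝ} (h0 : 0 ≤ r) (h1 : r < 1) (θ t : ℝ) :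
    HasDerivAt (fun t => t + 2 * Real.arctan (r * Real.sin (t - θ) / (1 - r * Real.cos (t - θ))))
      (K (θ - t) r) t := by
  have hden : ∀ s : ℝ, (1 : ℝ) - r * Real.cos s ≠ 0 := fun s => (one_sub_mul_cos_pos h0 h1 s).ne'
  set q : ℝ → ℝ := fun t => r * Real.sin (t - θ) / (1 - r * Real.cos (t - θ)) with hq
  have hnum : HasDerivAt (fun t => r * Real.sin (t - θ)) (r * Real.cos (t - θ)) t := by
    simpa using (((Real.hasDerivAt_sin (t - θ)).comp t ((hasDerivAt_id t).sub_const θ)).const_mul r)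
  have hden' : HasDerivAt (fun t => 1 - r * Real.cos (t - θ)) (r * Real.sin (t - θ)) t := by
    have : HasDerivAt (fun t => r * Real.cos (t - θ)) (r * (-Real.sin (t - θ))) t := by
      simpa using (((Real.hasDerivAt_cos (t - θ)).comp t ((hasDerivAt_id t).sub_const θ)).const_mul r)
    simpa using (this.const_sub 1)
  have hqd : HasDerivAt q
      ((r * Real.cos (t - θ) * (1 - r * Real.cos (t - θ)) - r * Real.sin (t - θ) * (r * Real.sin (t - θ)))
        / (1 - r * Real.cos (t - θ))^2) t := hnum.div hden' (hden _)
  have harc : HasDerivAt (fun t => Real.arctan (q t))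
      ((1 / (1 + q t ^ 2)) *
        ((r * Real.cos (t - θ) * (1 - r * Real.cos (t - θ)) - r * Real.sin (t - θ) * (r * Real.sin (t - θ)))
          / (1 - r * Real.cos (t - θ))^2)) t := by
    simpa [Function.comp_def] using (Real.hasDerivAt_arctan (q t)).comp t hqd
  have h : HasDerivAt (fun t => t + 2 * Real.arctan (q t)) _ t := ((hasDerivAt_id t).add ((harc.const_mul 2)))
  convert h using 1
  have hs := Real.sin_sq_add_cos_sq (t - θ)
  have hd := Kdenom_pos h0 h1 (θ - t)
  have hden2 := one_sub_mul_cos_pos h0 h1 (t - θ)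
  have hcc : Real.cos (θ - t) = Real.cos (t - θ) := by
    rw [show θ - t = -(t - θ) by ring, Real.cos_neg]
  simp only [K, hcc] at hd ⊢
  simp only [hq]
  have hs2 : Real.sin (t - θ) ^ 2 = 1 - Real.cos (t - θ) ^ 2 := by nlinarith [hs]
  rw [div_eq_iff hd.ne']
  field_simp
  ring_nf
  rw [hs2]
  ring


lemma K_intervalIntegrable {r : ℝ} (h0 : 0 ≤ r) (h1 : r < 1) (θ a b : ℝ) :
    IntervalIntegrable (fun t => K (θ - t) r) volume a b :=
  (K_continuous h0 h1 θ).intervalIntegrable a b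

lemma integral_K {r : ℝ} (h0 : 0 ≤ r) (h1 : r < 1) (θ a b : ℝ) :
    ∫ t in a..b, K (θ - t) r =
      (b + 2 * Real.arctan (r * Real.sin (b - θ) / (1 - r * Real.cos (b - θ))))
      - (a + 2 * Real.arctan (r * Real.sin (a - θ) / (1 - r * Real.cos (a - θ)))) := by
  exact intervalIntegral.integral_eq_sub_of_hasDerivAt
    (fun t _ => hasDerivAt_G h0 h1 θ t) (K_intervalIntegrable h0 h1 θ a b)

lemma integral_K_full {r : ℝ} (h0 : 0 ≤ r) (h1 : r < 1) (θ : ℝ) :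
    ∫ t in (0:ℝ)..(2*π), K (θ - t) r = 2*π := by
  rw [integral_K h0 h1 θ]
  have e1 : Real.sin (2*π - θ) = Real.sin (0 - θ) := by
    rw [Real.sin_two_pi_sub]; simp
  have e2 : Real.cos (2*π - θ) = Real.cos (0 - θ) := by
    rw [Real.cos_two_pi_sub]; simp [Real.cos_neg]
  rw [e1, e2]; ring

lemma integral_K_half {r : ℝ} (h0 : 0 ≤ r) (h1 : r < 1) (θ : ℝ) :
    ∫ t in (0:ℝ)..π, K (θ - t) r =
      π + 2 * (Real.arctan (r * Real.sin θ / (1 + r * Real.cos θ))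
        + Real.arctan (r * Real.sin θ / (1 - r * Real.cos θ))) := by
  rw [integral_K h0 h1 θ]
  rw [Real.sin_pi_sub, Real.cos_pi_sub]
  simp only [zero_sub, Real.sin_neg, Real.cos_neg]
  rw [show r * -Real.sin θ / (1 - r * Real.cos θ) = -(r * Real.sin θ / (1 - r * Real.cos θ)) by ring,
    Real.arctan_neg]
  ring_nf

lemma K_mul_intervalIntegrable {r : ℝ} (h0 : 0 ≤ r) (h1 : r < 1) (θ a b : ℝ)
    {f : ℝ → ℝ} (hf : Measurable f) {C : ℝ} (hC : ∀ t, |f t| ≤ C) :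
    IntervalIntegrable (fun t => K (θ - t) r * f t) volume a b := by
  rw [intervalIntegrable_iff]
  apply Measure.integrableOn_of_bounded (M := (1+r)/(1-r) * C)
  · exact (measure_Ioc_lt_top).ne
  · exact ((K_continuous h0 h1 θ).measurable.mul hf).aestronglyMeasurable
  · filter_upwards with t
    rw [Real.norm_eq_abs, abs_mul, abs_of_nonneg (K_nonneg h0 h1 _)]
    have hK : K (θ - t) r ≤ (1+r)/(1-r) := by
      rw [K, div_le_div_iff₀ (Kdenom_pos h0 h1 _) (by linarith)]
      nlinarith [Real.cos_le_one (θ - t), Real.neg_one_le_cos (θ - t), sq_nonneg (1-r)]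
    have h0f : 0 ≤ |f t| := abs_nonneg _
    have hCnn : 0 ≤ C := h0f.trans (hC t)
    calc K (θ - t) r * |f t| ≤ ((1+r)/(1-r)) * |f t| :=
          mul_le_mul_of_nonneg_right hK h0f
      _ ≤ (1+r)/(1-r) * C := by
          apply mul_le_mul_of_nonneg_left (hC t) (by apply div_nonneg <;> linarith)

lemma cos_far {x η : ℝ} (hη : 0 < η) (hη2 : η ≤ 1) (hx1 : η/2 ≤ x) (hx2 : x ≤ 2*π - η/2) :
    Real.cos x ≤ Real.cos (η/2) := by
  have hπ := Real.pi_gt_three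
  rcases le_or_gt x π with hxπ | hxπ
  · exact Real.cos_le_cos_of_nonneg_of_le_pi (by linarith) hxπ hx1
  · have : Real.cos x = Real.cos (2*π - x) := (Real.cos_two_pi_sub x).symm
    rw [this]
    exact Real.cos_le_cos_of_nonneg_of_le_pi (by linarith) (by linarith) (by linarith)

lemma K_far_bound {r θ η t : ℝ} (h0 : 0 ≤ r) (h1 : r < 1) (hη : 0 < η) (hη2 : η ≤ 1)
    (hθ : |θ| ≤ η/2) (ht1 : η ≤ t) (ht2 : t ≤ 2*π - η) :
    K (θ - t) r ≤ (1 - r^2) / (1 - Real.cos (η/2)) := by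
  have hθ1 := abs_le.mp hθ
  have hcos : Real.cos (θ - t) ≤ Real.cos (η/2) := by
    have : Real.cos (θ - t) = Real.cos (t - θ) := by
      rw [show θ - t = -(t - θ) by ring, Real.cos_neg]
    rw [this]
    exact cos_far hη hη2 (by linarith) (by linarith)
  have hc1 : Real.cos (η/2) < 1 := by
    calc Real.cos (η/2) < Real.cos 0 := by
          apply Real.cos_lt_cos_of_nonneg_of_le_pi le_rfl ?_ (by linarith)
          linarith [Real.pi_gt_three]
      _ = 1 := Real.cos_zero
  have hc0 : 0 < Real.cos (η/2) := by
    apply Real.cos_pos_of_mem_Ioo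
    constructor <;> [linarith [Real.pi_gt_three]; linarith [Real.pi_gt_three]]
  rw [K, div_le_div_iff₀ (Kdenom_pos h0 h1 _) (by linarith)]
  have hnum : 0 ≤ 1 - r^2 := by nlinarith
  have hden : 1 - Real.cos (η/2) ≤ 1 - 2*r*Real.cos (θ - t) + r^2 := by
    have h2 : 1 - 2*r*Real.cos (η/2) + r^2 ≤ 1 - 2*r*Real.cos (θ - t) + r^2 := by
      nlinarith
    refine le_trans ?_ h2
    nlinarith [sq_nonneg (1 - r)]
  nlinarith

lemma integral_bound {r θ η δ M : ℝ} (h0 : 0 ≤ r) (h1 : r < 1) (hη : 0 < η) (hη2 : η ≤ 1)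
    (hθ : |θ| ≤ η/2) (hδ : 0 ≤ δ) (hM0 : 0 ≤ M)
    {h : ℝ → ℝ} (hm : Measurable h) (hMb : ∀ t, |h t| ≤ M)
    (hsmall : ∀ t ∈ Ioo (0:ℝ) η, |h t| ≤ δ)
    (hsmall2 : ∀ t ∈ Ioo (2*π - η) (2*π), |h t| ≤ δ) :
    |∫ t in (0:ℝ)..(2*π), K (θ - t) r * h t| ≤
      2*π*δ + 2*π * (M * (1 - r^2) / (1 - Real.cos (η/2))) := by
  have hπ := Real.pi_gt_three
  have hc1 : Real.cos (η/2) < 1 := by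
    calc Real.cos (η/2) < Real.cos 0 :=
          Real.cos_lt_cos_of_nonneg_of_le_pi le_rfl (by linarith) (by linarith)
      _ = 1 := Real.cos_zero
  set c : ℝ := M * (1 - r^2) / (1 - Real.cos (η/2)) with hc
  have hcnn : 0 ≤ c := by
    apply div_nonneg _ (by linarith)
    apply mul_nonneg hM0 (by nlinarith)
  have habs : |∫ t in (0:ℝ)..(2*π), K (θ - t) r * h t| ≤
      ∫ t in (0:ℝ)..(2*π), |K (θ - t) r * h t| :=
    intervalIntegral.abs_integral_le_integral_abs (by linarith)
  have hint1 : IntervalIntegrable (fun t => |K (θ - t) r * h t|) volume 0 (2*π) :=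
    (K_mul_intervalIntegrable h0 h1 θ 0 (2*π) hm hMb).abs
  have hint2 : IntervalIntegrable (fun t => δ * K (θ - t) r + c) volume 0 (2*π) :=
    ((continuous_const.mul (K_continuous h0 h1 θ)).add continuous_const).intervalIntegrable 0 (2*π)
  have hmono : (∫ t in (0:ℝ)..(2*π), |K (θ - t) r * h t|) ≤
      ∫ t in (0:ℝ)..(2*π), (δ * K (θ - t) r + c) := by
    apply intervalIntegral.integral_mono_ae_restrict (by linarith) hint1 hint2
    have hne : ∀ᵐ t : ℝ ∂(volume.restrict (Icc 0 (2*π))), t ≠ 0 ∧ t ≠ 2*π := by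
      have : (volume.restrict (Icc (0:ℝ) (2*π))) ({0, 2*π} : Set ℝ) = 0 := by
        apply le_antisymm _ zero_le
        calc (volume.restrict (Icc (0:ℝ) (2*π))) {0, 2*π} ≤ volume ({0, 2*π} : Set ℝ) :=
              Measure.restrict_le_self _
          _ = 0 := by
            rw [show ({0, 2*π} : Set ℝ) = {0} ∪ {2*π} by rfl, measure_union_null] <;>
              simp [Real.volume_singleton]
      filter_upwards [measure_eq_zero_iff_ae_notMem.mp this] with t ht
      simp only [mem_insert_iff, mem_singleton_iff, not_or] at ht
      exact ht
    filter_upwards [hne, MeasureTheory.ae_restrict_mem measurableSet_Icc] with t htne htIcc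
    obtain ⟨ht0, ht2π⟩ := htne
    have ht0' : 0 < t := lt_of_le_of_ne htIcc.1 (Ne.symm ht0)
    have ht2' : t < 2*π := lt_of_le_of_ne htIcc.2 ht2π
    have hKnn := K_nonneg h0 h1 (θ - t)
    rw [abs_mul, abs_of_nonneg hKnn]
    rcases lt_or_ge t η with hcase | hcase
    · calc K (θ - t) r * |h t| ≤ K (θ - t) r * δ :=
            mul_le_mul_of_nonneg_left (hsmall t ⟨ht0', hcase⟩) hKnn
        _ ≤ δ * K (θ - t) r + c := by linarith [mul_comm (K (θ - t) r) δ]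
    · rcases lt_or_ge (2*π - η) t with hcase2 | hcase2
      · calc K (θ - t) r * |h t| ≤ K (θ - t) r * δ :=
              mul_le_mul_of_nonneg_left (hsmall2 t ⟨hcase2, ht2'⟩) hKnn
          _ ≤ δ * K (θ - t) r + c := by linarith [mul_comm (K (θ - t) r) δ]
      · have hKb := K_far_bound h0 h1 hη hη2 hθ hcase hcase2
        calc K (θ - t) r * |h t| ≤ ((1 - r^2) / (1 - Real.cos (η/2))) * M := by
              apply mul_le_mul hKb (hMb t) (abs_nonneg _)
              apply div_nonneg (by nlinarith) (by linarith)
          _ = c := by rw [hc]; ring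
          _ ≤ δ * K (θ - t) r + c := by
              have : 0 ≤ δ * K (θ - t) r := mul_nonneg hδ hKnn
              linarith
  have hval : (∫ t in (0:ℝ)..(2*π), (δ * K (θ - t) r + c)) = δ * (2*π) + (2*π) * c := by
    rw [intervalIntegral.integral_add ((K_intervalIntegrable h0 h1 θ 0 (2*π)).const_mul δ)
      (intervalIntegrable_const), intervalIntegral.integral_const_mul, integral_K_full h0 h1,
      intervalIntegral.integral_const]
    simp only [smul_eq_mul, sub_zero]
  calc |∫ t in (0:ℝ)..(2*π), K (θ - t) r * h t| ≤ _ := habs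
    _ ≤ _ := hmono
    _ = δ * (2*π) + (2*π) * c := hval
    _ = 2*π*δ + 2*π*c := by ring

lemma remainder_tendsto {h : ℝ → ℝ} (hm : Measurable h) {M : ℝ} (hM : ∀ t, |h t| ≤ M)
    (hz : Tendsto h (nhdsWithin 0 (Ioi 0)) (nhds 0))
    (hz2 : Tendsto h (nhdsWithin (2*π) (Iio (2*π))) (nhds 0))
    {l : Filter ℝ} {Θ R : ℝ → ℝ}
    (hΘ : Tendsto Θ l (nhds 0)) (hR : Tendsto R l (nhds 1))
    (hR01 : ∀ᶠ x in l, R x ∈ Ico (0:ℝ) 1) :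
    Tendsto (fun x => ∫ t in (0:ℝ)..(2*π), K (Θ x - t) (R x) * h t) l (nhds 0) := by
  have hπ := Real.pi_gt_three
  have hM0 : 0 ≤ M := (abs_nonneg _).trans (hM 0)
  rw [NormedAddCommGroup.tendsto_nhds_zero]
  intro δ hδ
  set δ' : ℝ := δ / (8*π) with hδ'def
  have hδ' : 0 < δ' := by positivity
  -- get η₁ from hz
  rw [Metric.tendsto_nhdsWithin_nhds] at hz hz2
  obtain ⟨η₁, hη₁, hz⟩ := hz δ' hδ'
  obtain ⟨η₂, hη₂, hz2⟩ := hz2 δ' hδ'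
  set η : ℝ := min (min η₁ η₂) 1 with hηdef
  have hη : 0 < η := lt_min (lt_min hη₁ hη₂) one_pos
  have hη2 : η ≤ 1 := min_le_right _ _
  have hsmall : ∀ t ∈ Ioo (0:ℝ) η, |h t| ≤ δ' := by
    intro t ht
    have : dist (h t) 0 < δ' := hz (mem_Ioi.mpr ht.1) (by
      rw [Real.dist_eq, sub_zero, abs_of_pos ht.1]
      exact ht.2.trans_le ((min_le_left _ _).trans (min_le_left _ _)))
    rw [Real.dist_eq, sub_zero] at this
    exact this.le
  have hsmall2 : ∀ t ∈ Ioo (2*π - η) (2*π), |h t| ≤ δ' := by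
    intro t ht
    have : dist (h t) 0 < δ' := hz2 (mem_Iio.mpr ht.2) (by
      rw [Real.dist_eq, abs_of_neg (by linarith [ht.2])]
      have : η ≤ η₂ := (min_le_left _ _).trans (min_le_right _ _)
      linarith [ht.1])
    rw [Real.dist_eq, sub_zero] at this
    exact this.le
  have hc1 : Real.cos (η/2) < 1 := by
    calc Real.cos (η/2) < Real.cos 0 :=
          Real.cos_lt_cos_of_nonneg_of_le_pi le_rfl (by linarith) (by linarith)
      _ = 1 := Real.cos_zero
  -- eventually facts
  have E1 : ∀ᶠ x in l, |Θ x| ≤ η/2 := by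
    have := Metric.tendsto_nhds.mp hΘ (η/2) (by positivity)
    filter_upwards [this] with x hx
    rw [Real.dist_eq, sub_zero] at hx
    exact hx.le
  have E3 : Tendsto (fun x => 2*π * (M * (1 - R x^2) / (1 - Real.cos (η/2)))) l (nhds 0) := by
    have : Tendsto (fun x => 1 - R x ^ 2) l (nhds 0) := by
      have := ((hR.mul hR).const_sub 1)
      simp only [mul_one] at this
      simpa [pow_two] using this
    have h2 : Tendsto (fun x => 2*π * (M * (1 - R x^2) / (1 - Real.cos (η/2)))) l
        (nhds (2*π * (M * 0 / (1 - Real.cos (η/2))))) := by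
      apply Tendsto.const_mul
      apply Tendsto.div_const
      · exact this.const_mul M
    simpa using h2
  have E3' : ∀ᶠ x in l, 2*π * (M * (1 - R x^2) / (1 - Real.cos (η/2))) < δ/2 :=
    E3.eventually_lt_const (by positivity)
  filter_upwards [E1, E3', hR01] with x h1 h3 hx01
  rw [Real.norm_eq_abs]
  have key := integral_bound hx01.1 hx01.2 hη hη2 h1 hδ'.le hM0 hm hM hsmall hsmall2
  have hπ0 : (π:ℝ) ≠ 0 := by positivity
  have : 2*π*δ' ≤ δ/4 := by
    rw [hδ'def]
    rw [show 2*π*(δ/(8*π)) = δ/4 by field_simp; ring]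
  calc |∫ t in (0:ℝ)..(2*π), K (Θ x - t) (R x) * h t| ≤
      2*π*δ' + 2*π * (M * (1 - R x^2) / (1 - Real.cos (η/2))) := key
    _ < δ/4 + δ/2 := by linarith
    _ < δ := by linarith

noncomputable def Hf : ℝ → ℝ := fun t => if t ∈ Ioo (0:ℝ) π then 1 else 0

lemma Hf_meas : Measurable Hf :=
  Measurable.ite measurableSet_Ioo measurable_const measurable_const

lemma Hf_bdd : ∀ t, |Hf t| ≤ 1 := by
  intro t
  rw [Hf]
  split <;> simp

lemma integral_K_Hf {r θ : ℝ} (h0 : 0 ≤ r) (h1 : r < 1) :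
    ∫ t in (0:ℝ)..(2*π), K (θ - t) r * Hf t = ∫ t in (0:ℝ)..π, K (θ - t) r := by
  have hπ := Real.pi_pos
  have i1 := K_mul_intervalIntegrable h0 h1 θ 0 π Hf_meas Hf_bdd
  have i2 := K_mul_intervalIntegrable h0 h1 θ π (2*π) Hf_meas Hf_bdd
  rw [← intervalIntegral.integral_add_adjacent_intervals i1 i2]
  have e2 : (∫ t in π..(2*π), K (θ - t) r * Hf t) = 0 := by
    rw [show (0:ℝ) = ∫ t in π..(2*π), (0:ℝ) by simp]
    apply intervalIntegral.integral_congr_ae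
    apply Eventually.of_forall
    intro x hx
    rw [uIoc_of_le (by linarith)] at hx
    have : x ∉ Ioo (0:ℝ) π := fun hc => absurd hc.2 (not_lt.mpr hx.1.le)
    simp [Hf, this]
  have e1 : (∫ t in (0:ℝ)..π, K (θ - t) r * Hf t) = ∫ t in (0:ℝ)..π, K (θ - t) r := by
    apply intervalIntegral.integral_congr_ae
    have hne : ∀ᵐ x : ℝ, x ≠ π := by
      have : volume ({π} : Set ℝ) = 0 := Real.volume_singleton
      filter_upwards [measure_eq_zero_iff_ae_notMem.mp this] with x hx
      simpa using hx
    filter_upwards [hne] with x hx hmem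
    rw [uIoc_of_le hπ.le] at hmem
    have : x ∈ Ioo (0:ℝ) π := ⟨hmem.1, lt_of_le_of_ne hmem.2 hx⟩
    simp [Hf, this]
  rw [e1, e2, add_zero]

lemma decomposition {r θ g0p g0m : ℝ} (h0 : 0 ≤ r) (h1 : r < 1) {g : ℝ → ℝ}
    (hmeas : Measurable g) {C : ℝ} (hC : ∀ t, |g t| ≤ C) :
    ∫ t in (0:ℝ)..(2*π), K (θ - t) r * g t
      = g0m * (2*π) + (g0p - g0m) * (∫ t in (0:ℝ)..π, K (θ - t) r)
        + ∫ t in (0:ℝ)..(2*π), K (θ - t) r * (g t - g0m - (g0p - g0m) * Hf t) := by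
  have hmeas' : Measurable (fun t => g t - g0m - (g0p - g0m) * Hf t) := by
    apply (hmeas.sub measurable_const).sub (Hf_meas.const_mul _)
  have hbd' : ∀ t, |g t - g0m - (g0p - g0m) * Hf t| ≤ C + |g0m| + |g0p - g0m| := by
    intro t
    have h1 := hC t
    have h2 := Hf_bdd t
    have : |(g0p - g0m) * Hf t| ≤ |g0p - g0m| := by
      rw [abs_mul]
      calc |g0p - g0m| * |Hf t| ≤ |g0p - g0m| * 1 :=
            mul_le_mul_of_nonneg_left h2 (abs_nonneg _)
        _ = |g0p - g0m| := mul_one _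
    calc |g t - g0m - (g0p - g0m) * Hf t| ≤ |g t - g0m| + |(g0p - g0m) * Hf t| := abs_sub _ _
      _ ≤ (|g t| + |g0m|) + |g0p - g0m| := add_le_add (abs_sub _ _) this
      _ ≤ C + |g0m| + |g0p - g0m| := by linarith
  have i0 : IntervalIntegrable (fun t => K (θ - t) r * g0m) volume 0 (2*π) :=
    K_mul_intervalIntegrable h0 h1 θ 0 (2*π) measurable_const (fun t => le_refl _)
  have iH := K_mul_intervalIntegrable h0 h1 θ 0 (2*π) Hf_meas Hf_bdd
  have ih := K_mul_intervalIntegrable h0 h1 θ 0 (2*π) hmeas' hbd'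
  have pt : ∀ t, K (θ - t) r * g t =
      (K (θ - t) r * g0m + (g0p - g0m) * (K (θ - t) r * Hf t))
        + K (θ - t) r * (g t - g0m - (g0p - g0m) * Hf t) := by
    intro t; ring
  rw [intervalIntegral.integral_congr (fun t _ => pt t)]
  rw [intervalIntegral.integral_add (i0.add (iH.const_mul _)) ih,
    intervalIntegral.integral_add i0 (iH.const_mul _),
    intervalIntegral.integral_const_mul, integral_K_Hf h0 h1]
  have : (∫ t in (0:ℝ)..(2*π), K (θ - t) r * g0m) = g0m * (2*π) := by
    rw [show (fun t => K (θ - t) r * g0m) = (fun t => g0m * K (θ - t) r) by funext t; ring]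
    rw [intervalIntegral.integral_const_mul, integral_K_full h0 h1]
  rw [this]

lemma sin_div_self_tendsto : Tendsto (fun x => Real.sin x / x) (nhdsWithin 0 {(0:ℝ)}ᶜ) (nhds 1) := by
  have h := Real.hasDerivAt_sin 0
  rw [hasDerivAt_iff_tendsto_slope, Real.cos_zero] at h
  refine h.congr fun x => ?_
  simp [slope_fun_def]
  ring

lemma one_sub_cos_div_self_tendsto :
    Tendsto (fun x => (1 - Real.cos x) / x) (nhdsWithin 0 {(0:ℝ)}ᶜ) (nhds 0) := by
  have h := Real.hasDerivAt_cos 0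
  rw [hasDerivAt_iff_tendsto_slope, Real.sin_zero] at h
  have h2 : Tendsto (fun x => -(slope Real.cos 0 x)) (nhdsWithin 0 {(0:ℝ)}ᶜ) (nhds 0) := by
    simpa using h.neg
  refine h2.congr fun x => ?_
  simp [slope_fun_def]
  ring

lemma arccos_aux (x : ℝ) :
    Real.arccos ((1 + x^2) ^ (-(1:ℝ)/2)) = Real.arctan |x| := by
  rw [Real.arctan_eq_arccos (abs_nonneg x), sq_abs]
  congr 1
  rw [show (-(1:ℝ)/2) = -(1/2:ℝ) by norm_num, Real.rpow_neg (by positivity),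
    ← Real.sqrt_eq_rpow]

/-- The harmonic extension of boundary data `g` to the unit disc, in polar coordinates. -/
noncomputable def poissonExt (g : ℝ → ℝ) (θ r : ℝ) : ℝ :=
  (1/(2*π)) * ∫ θ' in (0:ℝ)..(2*π), K (θ - θ') r * g θ'

theorem stmt0 (g : ℝ → ℝ) (hper : ∀ t, g (t + 2*π) = g t)
    (hbdd : ∃ C, ∀ t, |g t| ≤ C) (hmeas : Measurable g)
    (g0p g0m : ℝ)
    (hp : Tendsto g (nhdsWithin 0 (Ioi 0)) (nhds g0p))
    (hm : Tendsto g (nhdsWithin 0 (Iio 0)) (nhds g0m))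
    (ε : ℝ) (hε : ε ∈ Ioo (0:ℝ) 1)
    (θc θc' : ℝ → ℝ)
    (hrange : ∀ r ∈ Ioc (1-ε) 1, θc r ∈ Ioo (-(π/2)) (π/2))
    (hderiv : ∀ r ∈ Ioc (1-ε) 1, HasDerivWithinAt θc (θc' r) (Ioc (1-ε) 1) r)
    (hcont : ContinuousOn θc' (Ioc (1-ε) 1))
    (hend : θc 1 = 0)
    (σ : ℝ) (hσ : σ = 1 ∨ σ = -1)
    (hsign : ∀ r ∈ Ioo (1-ε) 1, σ * θc r > 0) :
    Tendsto (fun r => poissonExt g (θc r) r) (nhdsWithin 1 (Ioo (1-ε) 1))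
      (nhds ((g0p + g0m)/2 +
        σ * (g0p - g0m) * (1/π) * Real.arccos ((1 + (θc' 1)^2) ^ (-(1:ℝ)/2)))) := by
  obtain ⟨C, hC⟩ := hbdd
  obtain ⟨hε0, hε1⟩ := hε
  have hπ := Real.pi_gt_three
  have hπ0 : (π:ℝ) ≠ 0 := by positivity
  set l := nhdsWithin (1:ℝ) (Ioo (1-ε) 1) with hl
  have hlne : l.NeBot := by
    rw [hl, ← mem_closure_iff_nhdsWithin_neBot, closure_Ioo (by linarith : (1:ℝ)-ε ≠ 1)]
    exact ⟨by linarith, le_rfl⟩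
  have hmem : ∀ᶠ r in l, r ∈ Ioo (1-ε) 1 := self_mem_nhdsWithin
  have hrid : Tendsto (fun r : ℝ => r) l (nhds 1) := tendsto_id.mono_left nhdsWithin_le_nhds
  -- slope limit
  have hder1 := hderiv 1 ⟨by linarith, le_rfl⟩
  rw [hasDerivWithinAt_iff_tendsto_slope] at hder1
  have hsub : l ≤ nhdsWithin 1 (Ioc (1-ε) 1 \ {1}) := by
    apply nhdsWithin_mono
    intro x hx
    exact ⟨⟨hx.1, hx.2.le⟩, ne_of_lt hx.2⟩
  have hslope : Tendsto (fun r => θc r / (r - 1)) l (nhds (θc' 1)) := by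
    refine (hder1.mono_left hsub).congr fun r => ?_
    simp [slope_fun_def, hend]
    ring
  -- θc tends to 0
  have hθ0 : Tendsto θc l (nhds 0) := by
    have h2 : Tendsto (fun r => (θc r / (r - 1)) * (r - 1)) l (nhds (θc' 1 * 0)) := by
      apply hslope.mul
      have := hrid.sub_const 1
      simpa using this
    rw [mul_zero] at h2
    refine h2.congr' ?_
    filter_upwards [hmem] with r hr
    have : r - 1 ≠ 0 := by intro hcon; have := hr.2; nlinarith [hr.2]
    field_simp
  -- θc r / (1 - r) tends to c := -θc' 1
  set c : ℝ := -θc' 1 with hcdef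
  have hq : Tendsto (fun r => θc r / (1 - r)) l (nhds c) := by
    have h2 := hslope.neg
    refine h2.congr fun r => ?_
    rw [show (1:ℝ) - r = -(r-1) by ring, div_neg]
  -- sign fact
  have hσne : σ ≠ 0 := by rcases hσ with h|h <;> rw [h] <;> norm_num
  have hσsign : σ * θc' 1 ≤ 0 := by
    have h2 : Tendsto (fun r => σ * (θc r / (r - 1))) l (nhds (σ * θc' 1)) := hslope.const_mul σ
    apply le_of_tendsto h2
    filter_upwards [hmem] with r hr
    have h3 := hsign r hr
    have h4 : r - 1 < 0 := by linarith [hr.2]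
    rw [mul_div_assoc']
    exact le_of_lt (div_neg_of_pos_of_neg h3 h4)
  -- θc r ≠ 0 eventually
  have hθne : ∀ᶠ r in l, θc r ≠ 0 := by
    filter_upwards [hmem] with r hr hcon
    have := hsign r hr
    rw [hcon, mul_zero] at this
    exact lt_irrefl 0 this
  have hθ0' : Tendsto θc l (nhdsWithin 0 {(0:ℝ)}ᶜ) := by
    rw [tendsto_nhdsWithin_iff]
    exact ⟨hθ0, hθne⟩
  have hsinr : Tendsto (fun r => Real.sin (θc r) / θc r) l (nhds 1) :=
    sin_div_self_tendsto.comp hθ0'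
  have hcosr : Tendsto (fun r => (1 - Real.cos (θc r)) / θc r) l (nhds 0) :=
    one_sub_cos_div_self_tendsto.comp hθ0'
  have hsinc : Tendsto (fun r => Real.sin (θc r)) l (nhds 0) := by
    have := Real.continuous_sin.continuousAt.tendsto.comp hθ0
    simpa [Function.comp_def] using this
  have hcosc : Tendsto (fun r => Real.cos (θc r)) l (nhds 1) := by
    have := Real.continuous_cos.continuousAt.tendsto.comp hθ0
    simpa [Function.comp_def] using this
  -- limit of B
  have hB : Tendsto (fun r => r * Real.sin (θc r) / (1 - r * Real.cos (θc r))) l (nhds c) := by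
    have hNum : Tendsto (fun r => r * (Real.sin (θc r) / θc r) * (θc r / (1 - r))) l
        (nhds (1 * 1 * c)) := (hrid.mul hsinr).mul hq
    have hDen : Tendsto (fun r => 1 + r * ((1 - Real.cos (θc r)) / θc r) * (θc r / (1 - r))) l
        (nhds (1 + 1 * 0 * c)) := tendsto_const_nhds.add ((hrid.mul hcosr).mul hq)
    rw [show (1:ℝ) + 1 * 0 * c = 1 by ring] at hDen
    have hND := hNum.div hDen one_ne_zero
    rw [show (1:ℝ) * 1 * c / 1 = c by ring] at hND
    refine hND.congr' ?_
    filter_upwards [hmem, hθne] with r hr hθr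
    have hr1 : r - 1 ≠ 0 := by intro hcon; nlinarith [hr.2]
    have hr1' : (1:ℝ) - r ≠ 0 := by intro hcon; nlinarith [hr.2]
    have hr0 : 0 ≤ r := by linarith [hr.1]
    have hden := one_sub_mul_cos_pos hr0 hr.2 (θc r)
    have hNeq : r * (Real.sin (θc r) / θc r) * (θc r / (1 - r))
        = (r * Real.sin (θc r)) / (1 - r) := by field_simp
    have hDeq : 1 + r * ((1 - Real.cos (θc r)) / θc r) * (θc r / (1 - r))
        = (1 - r * Real.cos (θc r)) / (1 - r) := by field_simp; ring
    show (fun r => r * (Real.sin (θc r) / θc r) * (θc r / (1 - r))) r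
        / (fun r => 1 + r * ((1 - Real.cos (θc r)) / θc r) * (θc r / (1 - r))) r
        = r * Real.sin (θc r) / (1 - r * Real.cos (θc r))
    simp only []
    rw [hNeq, hDeq]
    field_simp
  have hA : Tendsto (fun r => r * Real.sin (θc r) / (1 + r * Real.cos (θc r))) l (nhds 0) := by
    have hNum : Tendsto (fun r => r * Real.sin (θc r)) l (nhds (1 * 0)) := hrid.mul hsinc
    have hDen : Tendsto (fun r => 1 + r * Real.cos (θc r)) l (nhds (1 + 1 * 1)) :=
      tendsto_const_nhds.add (hrid.mul hcosc)
    have hND := hNum.div hDen (by norm_num)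
    rw [show (1:ℝ) * 0 / (1 + 1 * 1) = 0 by norm_num] at hND
    exact hND
  -- remainder function
  set M : ℝ := C + |g0m| + |g0p - g0m| with hMdef
  set hfun : ℝ → ℝ := fun t => g t - g0m - (g0p - g0m) * Hf t with hfdef
  have hfmeas : Measurable hfun := (hmeas.sub measurable_const).sub (Hf_meas.const_mul _)
  have hfbd : ∀ t, |hfun t| ≤ M := by
    intro t
    have h1 := hC t
    have h2 := Hf_bdd t
    have h3 : |(g0p - g0m) * Hf t| ≤ |g0p - g0m| := by
      rw [abs_mul]
      calc |g0p - g0m| * |Hf t| ≤ |g0p - g0m| * 1 :=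
            mul_le_mul_of_nonneg_left h2 (abs_nonneg _)
        _ = |g0p - g0m| := mul_one _
    calc |hfun t| ≤ |g t - g0m| + |(g0p - g0m) * Hf t| := abs_sub _ _
      _ ≤ (|g t| + |g0m|) + |g0p - g0m| := add_le_add (abs_sub _ _) h3
      _ ≤ M := by rw [hMdef]; linarith
  have hz : Tendsto hfun (nhdsWithin 0 (Ioi 0)) (nhds 0) := by
    have hev : ∀ᶠ t in nhdsWithin 0 (Ioi 0), hfun t = g t - g0m - (g0p - g0m) := by
      filter_upwards [Ioo_mem_nhdsGT_of_mem (⟨le_rfl, Real.pi_pos⟩ : (0:ℝ) ∈ Ico 0 π)] with t ht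
      show g t - g0m - (g0p - g0m) * Hf t = g t - g0m - (g0p - g0m)
      simp only [Hf, if_pos ht, mul_one]
    have h2 : Tendsto (fun t => g t - g0m - (g0p - g0m)) (nhdsWithin 0 (Ioi 0))
        (nhds (g0p - g0m - (g0p - g0m))) := (hp.sub_const _).sub_const _
    rw [show g0p - g0m - (g0p - g0m) = 0 by ring] at h2
    exact h2.congr' (hev.mono fun t ht => ht.symm)
  have hz2 : Tendsto hfun (nhdsWithin (2*π) (Iio (2*π))) (nhds 0) := by
    have hev : ∀ᶠ t in nhdsWithin (2*π) (Iio (2*π)), hfun t = g (t - 2*π) - g0m := by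
      filter_upwards [Ioo_mem_nhdsLT_of_mem (⟨by linarith, le_rfl⟩ : (2*π) ∈ Ioc π (2*π))]
        with t ht
      have hH : t ∉ Ioo (0:ℝ) π := fun hcon => absurd hcon.2 (not_lt.mpr ht.1.le)
      have hg : g t = g (t - 2*π) := by rw [← hper (t - 2*π)]; ring_nf
      show g t - g0m - (g0p - g0m) * Hf t = g (t - 2*π) - g0m
      simp only [Hf]
      rw [if_neg hH, mul_zero, sub_zero, hg]
    have hmap : Tendsto (fun t => t - 2*π) (nhdsWithin (2*π) (Iio (2*π))) (nhdsWithin 0 (Iio 0)) := by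
      rw [tendsto_nhdsWithin_iff]
      constructor
      · have h3 : Tendsto (fun t : ℝ => t - 2*π) (nhds (2*π)) (nhds 0) := by
          have := tendsto_id (x := nhds (2*π)) |>.sub_const (2*π)
          simpa using this
        exact h3.mono_left nhdsWithin_le_nhds
      · filter_upwards [self_mem_nhdsWithin] with t ht
        simp only [mem_Iio] at ht ⊢
        linarith
    have h2 : Tendsto (fun t => g (t - 2*π) - g0m) (nhdsWithin (2*π) (Iio (2*π)))
        (nhds (g0m - g0m)) := (hm.comp hmap).sub_const _
    rw [sub_self] at h2
    exact h2.congr' (hev.mono fun t ht => ht.symm)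
  have hrem : Tendsto (fun r => ∫ t in (0:ℝ)..(2*π), K (θc r - t) r * hfun t) l (nhds 0) := by
    apply remainder_tendsto hfmeas hfbd hz hz2 hθ0 hrid
    filter_upwards [hmem] with r hr
    exact ⟨by linarith [hr.1], hr.2⟩
  -- eventual formula
  have hform : ∀ᶠ r in l, poissonExt g (θc r) r
      = g0m + (g0p - g0m) * ((1/(2*π)) * (π + 2*(Real.arctan (r*Real.sin (θc r)/(1 + r*Real.cos (θc r)))
          + Real.arctan (r*Real.sin (θc r)/(1 - r*Real.cos (θc r))))))
        + (1/(2*π)) * (∫ t in (0:ℝ)..(2*π), K (θc r - t) r * hfun t) := by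
    filter_upwards [hmem] with r hr
    have hr0 : (0:ℝ) ≤ r := by linarith [hr.1]
    rw [poissonExt, decomposition (g0p := g0p) (g0m := g0m) hr0 hr.2 hmeas hC,
      integral_K_half hr0 hr.2]
    rw [hfdef]
    field_simp
  have harcA : Tendsto (fun r => Real.arctan (r*Real.sin (θc r)/(1 + r*Real.cos (θc r)))) l (nhds 0) := by
    have := Real.continuous_arctan.continuousAt.tendsto.comp hA
    simpa [Real.arctan_zero, Function.comp_def] using this
  have harcB : Tendsto (fun r => Real.arctan (r*Real.sin (θc r)/(1 - r*Real.cos (θc r)))) l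
      (nhds (Real.arctan c)) := Real.continuous_arctan.continuousAt.tendsto.comp hB
  have hfinal : Tendsto (fun r => g0m + (g0p - g0m) * ((1/(2*π)) * (π + 2*(Real.arctan (r*Real.sin (θc r)/(1 + r*Real.cos (θc r)))
          + Real.arctan (r*Real.sin (θc r)/(1 - r*Real.cos (θc r))))))
        + (1/(2*π)) * (∫ t in (0:ℝ)..(2*π), K (θc r - t) r * hfun t)) l
      (nhds (g0m + (g0p - g0m) * ((1/(2*π)) * (π + 2*(0 + Real.arctan c))) + (1/(2*π)) * 0)) := by
    apply Tendsto.add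
    · apply Tendsto.add tendsto_const_nhds
      apply Tendsto.const_mul
      apply Tendsto.const_mul
      exact tendsto_const_nhds.add ((harcA.add harcB).const_mul 2)
    · exact hrem.const_mul _
  have hmain : Tendsto (fun r => poissonExt g (θc r) r) l
      (nhds (g0m + (g0p - g0m) * ((1/(2*π)) * (π + 2*(0 + Real.arctan c))) + (1/(2*π)) * 0)) :=
    hfinal.congr' (hform.mono fun r h => h.symm)
  -- identify the limit value
  have key : Real.arctan c = σ * Real.arctan |θc' 1| := by
    rcases hσ with h|h <;> subst h
    · have h0 : θc' 1 ≤ 0 := by linarith [hσsign]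
      rw [abs_of_nonpos h0, hcdef, one_mul]
    · have h0 : 0 ≤ θc' 1 := by linarith [hσsign]
      rw [abs_of_nonneg h0, hcdef, Real.arctan_neg]
      ring
  have hval : (g0p + g0m)/2 + σ * (g0p - g0m) * (1/π) * Real.arccos ((1 + (θc' 1)^2) ^ (-(1:ℝ)/2))
      = g0m + (g0p - g0m) * ((1/(2*π)) * (π + 2*(0 + Real.arctan c))) + (1/(2*π)) * 0 := by
    rw [arccos_aux, key]
    field_simp
    ring
  rw [hval]
  exact hmain
end

section
/- For all r ∈ [0,1) and all θ ∈ ℝ, (1/(2π)) ∫₀^{2π} K(θ−θ′, r) · θ′ dθ′ = π − 2 ∑_{n=1}^∞ (rⁿ/n) sin(nθ). -/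
open Real MeasureTheory Set

lemma denom_pos (r ψ : ℝ) (hr0 : 0 ≤ r) (hr1 : r < 1) :
    0 < 1 - 2*r*Real.cos ψ + r^2 := by
  nlinarith [Real.cos_le_one ψ, Real.neg_one_le_cos ψ, sq_nonneg (1 - r), sq_nonneg (1 + r)]

lemma kernel_series (r ψ : ℝ) (hr0 : 0 ≤ r) (hr1 : r < 1) :
    K ψ r = 1 + 2 * ∑' n : ℕ, r^(n+1) * Real.cos (((n:ℝ)+1)*ψ) := by
  have hz : ‖(r * Complex.exp (ψ * Complex.I) : ℂ)‖ < 1 := by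
    rw [norm_mul, Complex.norm_exp_ofReal_mul_I]
    simpa [abs_of_nonneg hr0] using hr1
  set z : ℂ := r * Complex.exp (ψ * Complex.I) with hzdef
  have hsum : Summable (fun n : ℕ => z^(n+1)) := by
    simpa [pow_succ, mul_comm] using (summable_geometric_of_norm_lt_one hz).mul_left z
  have hre : ∀ n : ℕ, (z^(n+1)).re = r^(n+1) * Real.cos (((n:ℝ)+1)*ψ) := by
    intro n
    have : z^(n+1) = (r:ℂ)^(n+1) * Complex.exp ((((n:ℝ)+1)*ψ : ℝ) * Complex.I) := by
      rw [hzdef, mul_pow, ← Complex.exp_nat_mul]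
      push_cast
      ring_nf
    rw [this, ← Complex.ofReal_pow, Complex.re_ofReal_mul, Complex.exp_ofReal_mul_I_re]
  have hts : ∑' n : ℕ, r^(n+1) * Real.cos (((n:ℝ)+1)*ψ) = (∑' n : ℕ, z^(n+1)).re := by
    rw [Complex.re_tsum hsum]
    exact tsum_congr fun n => (hre n).symm
  have hgeo : ∑' n : ℕ, z^(n+1) = z * (1 - z)⁻¹ := by
    simp_rw [pow_succ, mul_comm (z ^ _) z]
    rw [tsum_mul_left, tsum_geometric_of_norm_lt_one hz]
  rw [hts, hgeo]
  have hd := denom_pos r ψ hr0 hr1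
  have hzre : z.re = r * Real.cos ψ := by
    simp [hzdef, Complex.mul_re, Complex.exp_ofReal_mul_I_re, Complex.exp_ofReal_mul_I_im]
  have hzim : z.im = r * Real.sin ψ := by
    simp [hzdef, Complex.mul_im, Complex.exp_ofReal_mul_I_re, Complex.exp_ofReal_mul_I_im]
  have hns : Complex.normSq (1 - z) = 1 - 2*r*Real.cos ψ + r^2 := by
    rw [Complex.normSq_apply]
    simp only [Complex.sub_re, Complex.sub_im, Complex.one_re, Complex.one_im, hzre, hzim]
    nlinarith [Real.sin_sq_add_cos_sq ψ]
  rw [show z * (1-z)⁻¹ = z / (1-z) from (div_eq_mul_inv z _).symm, Complex.div_re, hns]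
  simp only [Complex.sub_re, Complex.sub_im, Complex.one_re, Complex.one_im, hzre, hzim]
  rw [K]
  have hs := Real.sin_sq_add_cos_sq ψ
  have hd2 : 1 - r*2*Real.cos ψ + r^2 ≠ 0 := by nlinarith [hd]
  field_simp
  nlinarith [hs, hd]

open intervalIntegral in
lemma cos_int (θ : ℝ) (n : ℕ) :
    ∫ x in (0:ℝ)..(2*π), Real.cos (((n:ℝ)+1)*(θ - x)) * x
      = -(2*π/((n:ℝ)+1)) * Real.sin (((n:ℝ)+1)*θ) := by
  set m : ℝ := (n:ℝ)+1 with hm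
  have hm0 : (0:ℝ) < m := by positivity
  set F : ℝ → ℝ := fun x => -(x/m) * Real.sin (m*(θ-x)) + (1/m^2) * Real.cos (m*(θ-x)) with hF
  have hderiv : ∀ x ∈ Set.uIcc (0:ℝ) (2*π), HasDerivAt F (Real.cos (m*(θ-x)) * x) x := by
    intro x _
    have h1 : HasDerivAt (fun x : ℝ => m*(θ-x)) (m * (0-1)) x :=
      ((hasDerivAt_const x θ).sub (hasDerivAt_id x)).const_mul m
    have hsin : HasDerivAt (fun x => Real.sin (m*(θ-x))) (Real.cos (m*(θ-x)) * (m*(0-1))) x :=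
      (Real.hasDerivAt_sin _).comp x h1
    have hcos : HasDerivAt (fun x => Real.cos (m*(θ-x))) (-Real.sin (m*(θ-x)) * (m*(0-1))) x :=
      (Real.hasDerivAt_cos _).comp x h1
    have hid : HasDerivAt (fun x : ℝ => -(x/m)) (-(1/m)) x := ((hasDerivAt_id x).div_const m).neg
    have := (hid.mul hsin).add (hcos.const_mul (1/m^2))
    refine this.congr_deriv ?_
    field_simp [hm0.ne']
    ring
  have hcont : IntervalIntegrable (fun x => Real.cos (m*(θ-x)) * x) volume 0 (2*π) := by
    apply Continuous.intervalIntegrable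
    continuity
  rw [intervalIntegral.integral_eq_sub_of_hasDerivAt hderiv hcont]
  have e1 : m*(θ-2*π) = m*θ - ((n+1 : ℕ):ℝ)*(2*π) := by push_cast [hm]; ring
  simp only [hF, e1, Real.sin_sub_nat_mul_two_pi, Real.cos_sub_nat_mul_two_pi]
  -- push_cast
  field_simp
  ring

theorem stmt1 (r θ : ℝ) (hr : r ∈ Set.Ico (0:ℝ) 1) :
    (1/(2*π)) * ∫ θ' in (0:ℝ)..(2*π), K (θ - θ') r * θ' =
      π - 2 * ∑' n : ℕ, r^(n+1)/(n+1) * Real.sin ((n+1)*θ) := by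
  obtain ⟨hr0, hr1⟩ := hr
  set g : ℕ → ℝ → ℝ := fun n x => r^(n+1) * Real.cos (((n:ℝ)+1)*(θ - x)) * x with hg
  have hKx : ∀ x : ℝ, K (θ - x) r * x = x + 2 * ∑' n, g n x := by
    intro x
    rw [kernel_series r (θ - x) hr0 hr1, hg]
    rw [tsum_mul_right (f := fun n : ℕ => r^(n+1) * Real.cos (((n:ℝ)+1)*(θ - x))) (a := x)]
    ring
  have hcontK : Continuous (fun x => K (θ - x) r) := by
    apply Continuous.div (by continuity) (by continuity)
    exact fun x => (denom_pos r (θ - x) hr0 hr1).ne'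
  have hsum_eq : (fun x => ∑' n, g n x) = fun x => (K (θ - x) r * x - x)/2 := by
    funext x
    have := hKx x
    linarith
  have hconts : Continuous (fun x => ∑' n, g n x) := by
    rw [hsum_eq]; exact (((hcontK.mul continuous_id).sub continuous_id).div_const 2)
  -- interchange sum and integral
  have hmu : (volume.restrict (Ioc (0:ℝ) (2*π))) Set.univ = ENNReal.ofReal (2*π) := by
    simp [Real.volume_Ioc, Real.pi_pos.le]
  have hswap : ∫ x in (0:ℝ)..(2*π), ∑' n, g n x = ∑' n, ∫ x in (0:ℝ)..(2*π), g n x := by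
    have h2pi : (0:ℝ) ≤ 2*π := by positivity
    rw [intervalIntegral.integral_of_le h2pi]
    have hint : ∀ n : ℕ, Integrable (g n) (volume.restrict (Ioc (0:ℝ) (2*π))) :=
      fun n => (Continuous.integrableOn_Ioc (by fun_prop))
    rw [← MeasureTheory.integral_tsum_of_summable_integral_norm hint ?_]
    · exact tsum_congr fun n => (intervalIntegral.integral_of_le h2pi).symm
    · have hsummable : Summable (fun n : ℕ => (r^(n+1) * (2*π)) * (2*π)) :=
        ((summable_geometric_of_lt_one hr0 hr1).mul_left r |>.mul_right (2*π)
          |>.mul_right (2*π)).congr (fun n => by rw [pow_succ]; ring)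
      refine Summable.of_nonneg_of_le (fun n => integral_nonneg fun x => norm_nonneg _)
        (fun n => ?_) hsummable
      · have hb : ∀ᵐ x ∂(volume.restrict (Ioc (0:ℝ) (2*π))),
            ‖‖g n x‖‖ ≤ r^(n+1) * (2*π) := by
          filter_upwards [self_mem_ae_restrict measurableSet_Ioc] with x hx
          rw [norm_norm, hg]
          have h1 : |Real.cos (((n:ℝ)+1)*(θ - x))| ≤ 1 := Real.abs_cos_le_one _
          have h2 : |x| ≤ 2*π := by
            rw [abs_of_pos hx.1]; exact hx.2
          calc ‖r^(n+1) * Real.cos (((n:ℝ)+1)*(θ - x)) * x‖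
              = r^(n+1) * |Real.cos (((n:ℝ)+1)*(θ - x))| * |x| := by
                rw [norm_eq_abs, abs_mul, abs_mul, abs_of_nonneg (pow_nonneg hr0 _)]
            _ ≤ r^(n+1) * 1 * (2*π) := by
                apply mul_le_mul (mul_le_mul_of_nonneg_left h1 (pow_nonneg hr0 _)) h2
                  (abs_nonneg x) (by positivity)
            _ = r^(n+1) * (2*π) := by ring
        have := norm_integral_le_of_norm_le_const (μ := volume.restrict (Ioc (0:ℝ) (2*π)))
          (f := fun x => ‖g n x‖) hb
        rw [measureReal_def, hmu, ENNReal.toReal_ofReal (by positivity)] at this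
        exact le_trans (le_abs_self _) this
  -- values of individual integrals
  have hgi : ∀ n : ℕ, ∫ x in (0:ℝ)..(2*π), g n x
      = (-(2*π)) * (r^(n+1)/((n:ℝ)+1) * Real.sin (((n:ℝ)+1)*θ)) := by
    intro n
    simp only [hg, mul_assoc]
    rw [intervalIntegral.integral_const_mul, cos_int]
    ring
  have hintsum : IntervalIntegrable (fun x => ∑' n, g n x) volume 0 (2*π) :=
    hconts.intervalIntegrable _ _
  have hI : ∫ x in (0:ℝ)..(2*π), K (θ - x) r * x
      = 2*π^2 + 2 * ((-(2*π)) * ∑' n : ℕ, r^(n+1)/((n:ℝ)+1) * Real.sin (((n:ℝ)+1)*θ)) := by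
    rw [intervalIntegral.integral_congr (fun x _ => hKx x)]
    rw [intervalIntegral.integral_add (intervalIntegral.intervalIntegrable_id) (hintsum.const_mul 2)]
    rw [intervalIntegral.integral_const_mul, hswap]
    rw [tsum_congr hgi, tsum_mul_left, integral_id]
    ring
  rw [hI]
  have hπ : π ≠ 0 := Real.pi_ne_zero
  have hcast : ∑' n : ℕ, r^(n+1)/(((n:ℕ)+1 : ℕ):ℝ) * Real.sin ((((n:ℕ)+1 : ℕ):ℝ)*θ)
      = ∑' n : ℕ, r^(n+1)/((n:ℝ)+1) * Real.sin (((n:ℝ)+1)*θ) := by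
    apply tsum_congr; intro n; push_cast; ring_nf
  -- push_cast
  field_simp
  ring_nf
  congr 3
  funext n
  ring_nf
end

section
/- For every r ∈ [0,1) and every θ ∈ (−π, π), ∑_{n=1}^∞ (rⁿ/n) sin(nθ) = sgn(θ) · arccos( (1 − r cos θ) / (1 − 2r cos θ + r²)^{1/2} ), where sgn(θ) denotes the sign of θ (with sgn(0) = 0). -/
open Real Set

theorem stmt2 (r θ : ℝ) (hr : r ∈ Set.Ico (0:ℝ) 1) (hθ : θ ∈ Set.Ioo (-π) π) :
    ∑' n : ℕ, r^(n+1)/(n+1) * Real.sin ((n+1)*θ) =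
      Real.sign θ *
        Real.arccos ((1 - r*Real.cos θ) / Real.sqrt (1 - 2*r*Real.cos θ + r^2)) := by
  obtain ⟨hr0, hr1⟩ := hr
  obtain ⟨hθ1, hθ2⟩ := hθ
  set z : ℂ := (r : ℂ) * Complex.exp (θ * Complex.I) with hz_def
  have hznorm : ‖z‖ < 1 := by
    rw [hz_def, norm_mul,
      Complex.norm_exp_ofReal_mul_I, Complex.norm_real, Real.norm_eq_abs, abs_of_nonneg hr0, mul_one]
    exact hr1
  set w : ℂ := 1 - z with hw_def
  have hw0 : w ≠ 0 := by
    intro h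
    have : z = 1 := by rw [hw_def] at h; linear_combination (norm := module) -h
    rw [this] at hznorm; simp at hznorm
  have hwre : w.re = 1 - r * Real.cos θ := by
    simp [hw_def, hz_def, Complex.exp_ofReal_mul_I_re]
  have hwim : w.im = -(r * Real.sin θ) := by
    simp [hw_def, hz_def, Complex.exp_ofReal_mul_I_im]
  have habs : ‖w‖ = Real.sqrt (1 - 2*r*Real.cos θ + r^2) := by
    rw [Complex.norm_def, Complex.normSq_apply, hwre, hwim]
    congr 1
    have := Real.sin_sq_add_cos_sq θ
    nlinarith [this]
  -- the series
  have h1 := Complex.hasSum_taylorSeries_neg_log hznorm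
  have h2 : HasSum (fun n : ℕ => z ^ (n+1) / (n+1 : ℕ)) (-Complex.log w) := by
    have := (hasSum_nat_add_iff' (f := fun n : ℕ => z ^ n / n) 1).2 h1
    simpa [hw_def] using this
  have h3 := h2.mapL Complex.imCLM
  have hterm : (fun n : ℕ => Complex.imCLM (z ^ (n+1) / ((n+1 : ℕ) : ℂ)))
      = fun n : ℕ => r^(n+1)/(n+1) * Real.sin ((n+1)*θ) := by
    funext n
    have hzp : z ^ (n+1) = ((r^(n+1) : ℝ) : ℂ) * Complex.exp ((((n+1:ℕ)*θ : ℝ)) * Complex.I) := by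
      rw [hz_def, mul_pow, ← Complex.exp_nat_mul]
      push_cast
      ring_nf
    have : ((n+1:ℕ) : ℂ) = (((n+1:ℕ) : ℝ) : ℂ) := by push_cast; ring
    rw [Complex.imCLM_apply, hzp, this, Complex.div_ofReal_im, Complex.im_ofReal_mul,
      Complex.exp_ofReal_mul_I_im]
    push_cast
    ring
  rw [hterm] at h3
  have hsum : ∑' n : ℕ, r^(n+1)/(n+1) * Real.sin ((n+1)*θ) = -Complex.arg w := by
    rw [h3.tsum_eq]
    simp [Complex.log_im]
  rw [hsum]
  -- geometry
  rcases eq_or_lt_of_le hr0 with hr0' | hr0'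
  · -- r = 0
    have hz0 : z = 0 := by rw [hz_def, ← hr0']; simp
    have : w = 1 := by rw [hw_def, hz0]; ring
    rw [this]
    rw [← hr0']
    simp [Real.sqrt_one]
  rcases lt_trichotomy θ 0 with hθ0 | hθ0 | hθ0
  · -- θ < 0 : sin θ < 0, w.im > 0
    have hsin : Real.sin θ < 0 := Real.sin_neg_of_neg_of_neg_pi_lt hθ0 hθ1
    have him : 0 < w.im := by rw [hwim]; nlinarith
    have := Complex.arg_of_im_pos him
    rw [hwre, habs] at this
    rw [← this, Real.sign_of_neg hθ0]
    ring
  · subst hθ0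
    have hw1 : w = ((1 - r : ℝ) : ℂ) := by
      rw [hw_def, hz_def]
      simp [Complex.ext_iff]
    rw [hw1, Complex.arg_ofReal_of_nonneg (by linarith)]
    simp
  · -- θ > 0
    have hsin : 0 < Real.sin θ := Real.sin_pos_of_pos_of_lt_pi hθ0 hθ2
    have him : w.im < 0 := by rw [hwim]; nlinarith
    have := Complex.arg_of_im_neg him
    rw [hwre, habs] at this
    have h4 : Real.arccos ((1 - r*Real.cos θ) / Real.sqrt (1 - 2*r*Real.cos θ + r^2))
        = -Complex.arg w := by rw [this]; ring
    rw [h4, Real.sign_of_pos hθ0, one_mul]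
end

section
/- Let ε ∈ (0,1) and let θ: (1−ε, 1] → ℝ be continuously differentiable with θ(1) = 0. Then lim_{r→1⁻} (1 − r cos θ(r)) / (1 − 2r cos θ(r) + r²)^{1/2} = (1 + θ′(1)²)^{−1/2}, where θ′(1) is the (one-sided) derivative at r = 1. -/
open Real Set Filter Topology

theorem stmt3 (ε : ℝ) (hε : ε ∈ Set.Ioo (0:ℝ) 1) (θc θc' : ℝ → ℝ)
    (hderiv : ∀ r ∈ Set.Ioc (1-ε) 1, HasDerivWithinAt θc (θc' r) (Set.Ioc (1-ε) 1) r)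
    (hcont : ContinuousOn θc' (Set.Ioc (1-ε) 1))
    (hend : θc 1 = 0) :
    Tendsto (fun r => (1 - r*Real.cos (θc r)) / Real.sqrt (1 - 2*r*Real.cos (θc r) + r^2))
      (nhdsWithin 1 (Set.Ioo (1-ε) 1))
      (nhds ((1 + (θc' 1)^2) ^ (-(1:ℝ)/2))) := by
  obtain ⟨hε0, hε1⟩ := hε
  set a := θc' 1 with ha
  set l := nhdsWithin (1:ℝ) (Set.Ioo (1-ε) 1) with hl
  set g : ℝ → ℝ := fun r => θc r / (1 - r) with hg
  set h : ℝ → ℝ := fun r => Real.sin (θc r / 2) / (1 - r) with hh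
  -- basic memberships
  have hmem : ∀ᶠ r in l, r ∈ Set.Ioo (1-ε) 1 := eventually_mem_nhdsWithin
  have hr1 : Tendsto (fun r : ℝ => 1 - r) l (𝓝 0) := by
    have : Tendsto (fun r : ℝ => 1 - r) (𝓝 1) (𝓝 (1-1)) :=
      Tendsto.sub tendsto_const_nhds tendsto_id
    rw [sub_self] at this
    exact this.mono_left nhdsWithin_le_nhds
  have hrid : Tendsto (fun r : ℝ => r) l (𝓝 1) :=
    tendsto_id.mono_left nhdsWithin_le_nhds
  -- step 1: g → -a
  have hgl : Tendsto g l (𝓝 (-a)) := by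
    have h1m : (1:ℝ) ∈ Set.Ioc (1-ε) 1 := ⟨by linarith, le_refl 1⟩
    have hslope := hasDerivWithinAt_iff_tendsto_slope.mp (hderiv 1 h1m)
    have hsub : Set.Ioo (1-ε) 1 ⊆ Set.Ioc (1-ε) 1 \ {1} := by
      intro x hx
      exact ⟨⟨hx.1, le_of_lt hx.2⟩, ne_of_lt hx.2⟩
    have hslope' : Tendsto (slope θc 1) l (𝓝 a) :=
      hslope.mono_left (nhdsWithin_mono _ hsub)
    have : Tendsto (fun r => -(slope θc 1 r)) l (𝓝 (-a)) := hslope'.neg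
    refine this.congr' ?_
    filter_upwards [hmem] with r hr
    have hne : r - 1 ≠ 0 := by
      have := hr.2; intro hc; apply absurd this; linarith [sub_eq_zero.mp hc]
    simp only [slope_def_field, hend, sub_zero, hg]
    rw [show (1:ℝ) - r = -(r - 1) by ring, div_neg]
  -- step 2: θc → 0
  have hθ : Tendsto θc l (𝓝 0) := by
    have : Tendsto (fun r => g r * (1 - r)) l (𝓝 ((-a) * 0)) := hgl.mul hr1
    rw [mul_zero] at this
    refine this.congr' ?_
    filter_upwards [hmem] with r hr
    have hne : (1:ℝ) - r ≠ 0 := by have := hr.2; intro hc; linarith [sub_eq_zero.mp hc]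
    simp only [hg]; exact div_mul_cancel₀ _ hne
  -- sinc function
  set S : ℝ → ℝ := fun x => if x = 0 then 1 else Real.sin x / x with hS
  have hScont : Tendsto S (𝓝 0) (𝓝 1) := by
    rw [← nhdsNE_sup_pure (0:ℝ)]
    refine Tendsto.sup ?_ ?_
    · have hd := (Real.hasDerivAt_sin 0)
      rw [Real.cos_zero] at hd
      have := hasDerivAt_iff_tendsto_slope.mp hd
      refine this.congr' ?_
      filter_upwards [self_mem_nhdsWithin] with x hx
      have hx0 : x ≠ 0 := hx
      simp [slope_def_field, hS, hx0, Real.sin_zero]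
    · have : S 0 = 1 := by simp [hS]
      rw [← this]
      exact tendsto_pure_nhds S 0
  -- step 3: h → -(a/2)
  have hθ2 : Tendsto (fun r => θc r / 2) l (𝓝 0) := by
    have := hθ.div_const 2
    simpa using this
  have hhl : Tendsto h l (𝓝 (-(a/2))) := by
    have hcomp : Tendsto (fun r => S (θc r / 2)) l (𝓝 1) := hScont.comp hθ2
    have hg2 : Tendsto (fun r => θc r / 2 / (1 - r)) l (𝓝 (-(a/2))) := by
      have := hgl.div_const 2
      rw [neg_div] at this
      refine this.congr ?_
      intro r
      simp only [hg]
      ring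
    have := hcomp.mul hg2
    rw [one_mul] at this
    refine this.congr ?_
    intro r
    by_cases hz : θc r / 2 = 0
    · simp [hh, hS, hz, Real.sin_zero]
    · simp only [hh, hS, hz, if_neg hz]
      have hθne : θc r ≠ 0 := by intro hc; apply hz; rw [hc]; ring
      by_cases ht : (1:ℝ) - r = 0
      · simp [ht]
      · field_simp
  -- step 4: algebraic limit
  have hh2 : Tendsto (fun r => (h r)^2) l (𝓝 ((a/2)^2)) := by
    have := hhl.pow 2
    simpa using this
  have hnum : Tendsto (fun r => 1 + 2*r*(1-r)*(h r)^2) l (𝓝 1) := by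
    have : Tendsto (fun r => 1 + 2*r*(1-r)*(h r)^2) l
        (𝓝 (1 + 2*1*0*((a/2)^2))) :=
      tendsto_const_nhds.add (((tendsto_const_nhds.mul hrid).mul hr1).mul hh2)
    simpa using this
  have hden_in : Tendsto (fun r => 1 + 4*r*(h r)^2) l (𝓝 (1 + a^2)) := by
    have : Tendsto (fun r => 1 + 4*r*(h r)^2) l (𝓝 (1 + 4*1*((a/2)^2))) :=
      tendsto_const_nhds.add ((tendsto_const_nhds.mul hrid).mul hh2)
    convert this using 2
    ring
  have hden : Tendsto (fun r => Real.sqrt (1 + 4*r*(h r)^2)) l (𝓝 (Real.sqrt (1 + a^2))) :=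
    (Real.continuous_sqrt.tendsto _).comp hden_in
  have hsqrt_pos : (0:ℝ) < Real.sqrt (1 + a^2) := Real.sqrt_pos.mpr (by positivity)
  have hF : Tendsto (fun r => (1 + 2*r*(1-r)*(h r)^2) / Real.sqrt (1 + 4*r*(h r)^2)) l
      (𝓝 (1 / Real.sqrt (1 + a^2))) := hnum.div hden (ne_of_gt hsqrt_pos)
  -- identify the limit value
  have hval : ((1:ℝ) + a^2) ^ (-(1:ℝ)/2) = 1 / Real.sqrt (1 + a^2) := by
    rw [show (-(1:ℝ)/2) = -(1/2 : ℝ) by ring,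
      Real.rpow_neg (by positivity), Real.sqrt_eq_rpow]
    norm_num
  rw [hval]
  -- transfer
  refine hF.congr' ?_
  filter_upwards [hmem] with r hr
  have ht : (0:ℝ) < 1 - r := by linarith [hr.2]
  have hr0 : (0:ℝ) < r := by linarith [hr.1]
  have htne : (1:ℝ) - r ≠ 0 := ne_of_gt ht
  have hsin : Real.sin (θc r / 2) = (1 - r) * h r := by
    simp only [hh]; field_simp
  have hc : Real.cos (θc r) = 1 - 2 * ((1-r) * h r)^2 := by
    have := Real.sin_sq_eq_half_sub (θc r / 2)
    rw [hsin] at this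
    have h2 : 2 * (θc r / 2) = θc r := by ring
    rw [h2] at this
    linarith
  have hnum_eq : 1 - r * Real.cos (θc r) = (1 - r) * (1 + 2*r*(1-r)*(h r)^2) := by
    rw [hc]; ring
  have hden_eq : 1 - 2*r*Real.cos (θc r) + r^2 = (1-r)^2 * (1 + 4*r*(h r)^2) := by
    rw [hc]; ring
  have hsqrt_eq : Real.sqrt (1 - 2*r*Real.cos (θc r) + r^2)
      = (1 - r) * Real.sqrt (1 + 4*r*(h r)^2) := by
    rw [hden_eq, Real.sqrt_mul (sq_nonneg _), Real.sqrt_sq ht.le]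
  rw [hnum_eq, hsqrt_eq, mul_div_mul_left _ _ htne]
end

section
/- Let 0 < θ* < π and let g be the 2π-periodic boundary function with g(θ′) = 1 for θ′ ∈ [−θ*, θ*] (mod 2π) and g(θ′) = 0 otherwise, and let u(θ,r) = (1/(2π)) ∫_{−θ*}^{θ*} K(θ−θ′, r) dθ′ be its harmonic extension to the unit disc. Let z₁ = (cos θ*, sin θ*), let M = (c, 0) with c ∈ ℝ, set ρ = |z₁ − M| and let θ̃* ∈ (0, π) be the angle with z₁ = M + ρ(cos θ̃*, sin θ̃*); assume θ* ≤ θ̃* < π. Then for every φ ∈ (θ̃*, 2π − θ̃*), the point p = M + ρ(cos φ, sin φ), provided |p| < 1, satisfies u(p) = (θ̃* − θ*)/π; i.e., writing p = (r cos θ, r sin θ) with 0 ≤ r < 1, u(θ, r) = (θ̃* − θ*)/π. In particular, u is constant on each such circular arc through z₁ and z₂ = (cos θ*, −sin θ*) inside the unit disc. -/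
open Real MeasureTheory Set

namespace PoissonAux

noncomputable def myE (t : ℝ) : ℂ := Complex.exp (↑t * Complex.I)

lemma myE_re (t : ℝ) : (myE t).re = Real.cos t := Complex.exp_ofReal_mul_I_re t

lemma myE_im (t : ℝ) : (myE t).im = Real.sin t := Complex.exp_ofReal_mul_I_im t

lemma myE_add (a b : ℝ) : myE (a + b) = myE a * myE b := by
  rw [myE, myE, myE, ← Complex.exp_add]
  congr 1
  push_cast
  ring

lemma myE_unit (a : ℝ) : myE a * myE (-a) = 1 := by
  rw [← myE_add]
  simp [myE]

lemma myE_abs (a : ℝ) : ‖myE a‖ = 1 := Complex.norm_exp_ofReal_mul_I a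

lemma myE_neg_sub (d : ℝ) : myE d - myE (-d) = 2 * ↑(Real.sin d) * Complex.I := by
  rw [myE, myE, Complex.exp_mul_I, Complex.exp_mul_I, ← Complex.ofReal_cos,
    ← Complex.ofReal_sin, ← Complex.ofReal_cos, ← Complex.ofReal_sin,
    Real.cos_neg, Real.sin_neg]
  push_cast
  ring

lemma myE_sub_myE (a b : ℝ) :
    myE a - myE b = 2 * ↑(Real.sin ((a - b)/2)) * Complex.I * myE ((a + b)/2) := by
  have h1 : a = (a+b)/2 + (a-b)/2 := by ring
  have h2 : b = (a+b)/2 + -((a-b)/2) := by ring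
  calc myE a - myE b = myE ((a+b)/2 + (a-b)/2) - myE ((a+b)/2 + -((a-b)/2)) := by
        rw [← h1, ← h2]
    _ = myE ((a+b)/2) * (myE ((a-b)/2) - myE (-((a-b)/2))) := by
        rw [myE_add, myE_add]; ring
    _ = myE ((a+b)/2) * (2 * ↑(Real.sin ((a-b)/2)) * Complex.I) := by rw [myE_neg_sub]
    _ = _ := by ring

lemma myE_arctan (A : ℝ) :
    myE (Real.arctan A) * ↑(Real.sqrt (1 + A^2)) = 1 + ↑A * Complex.I := by
  have hs : (0:ℝ) < Real.sqrt (1 + A^2) := Real.sqrt_pos.2 (by positivity)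
  have hne : Real.sqrt (1 + A^2) ≠ 0 := ne_of_gt hs
  rw [myE, Complex.exp_mul_I, ← Complex.ofReal_cos, ← Complex.ofReal_sin,
    Real.cos_arctan, Real.sin_arctan]
  push_cast
  field_simp
  exact mul_div_cancel_left₀ _ (by exact_mod_cast hne)

lemma oneSub_pos {r : ℝ} (hr0 : 0 ≤ r) (hr1 : r < 1) (ψ : ℝ) :
    0 < 1 - r * Real.cos ψ := by
  nlinarith [Real.cos_le_one ψ, Real.neg_one_le_cos ψ]

lemma denom_pos {r : ℝ} (hr0 : 0 ≤ r) (hr1 : r < 1) (ψ : ℝ) :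
    0 < 1 - 2*r*Real.cos ψ + r^2 := by
  nlinarith [Real.cos_le_one ψ, Real.neg_one_le_cos ψ, sq_nonneg (1 - r)]

set_option maxHeartbeats 800000 in
lemma poisson_hasDerivAt (r θ : ℝ) (hr0 : 0 ≤ r) (hr1 : r < 1) (x : ℝ) :
    HasDerivAt (fun y => (y - θ) - 2 * Real.arctan (r * Real.sin (θ - y) / (1 - r * Real.cos (θ - y))))
      (K (θ - x) r) x := by
  have hD : 0 < 1 - r * Real.cos (θ - x) := oneSub_pos hr0 hr1 _
  have hden : 0 < 1 - 2*r*Real.cos (θ - x) + r^2 := denom_pos hr0 hr1 _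
  have h1 : HasDerivAt (fun y : ℝ => θ - y) (-1) x := by
    simpa using (hasDerivAt_id x).const_sub θ
  have hsin : HasDerivAt (fun y => Real.sin (θ - y)) (Real.cos (θ - x) * (-1)) x :=
    (Real.hasDerivAt_sin (θ - x)).comp x h1
  have hcos : HasDerivAt (fun y => Real.cos (θ - y)) (-Real.sin (θ - x) * (-1)) x :=
    (Real.hasDerivAt_cos (θ - x)).comp x h1
  have hu : HasDerivAt (fun y => r * Real.sin (θ - y)) (r * (Real.cos (θ - x) * (-1))) x :=
    hsin.const_mul r
  have hv : HasDerivAt (fun y => 1 - r * Real.cos (θ - y)) (-(r * (-Real.sin (θ - x) * (-1)))) x :=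
    (hcos.const_mul r).const_sub 1
  have harc := (hu.div hv (ne_of_gt hD)).arctan
  have hid : HasDerivAt (fun y : ℝ => y - θ) 1 x := by
    simpa using (hasDerivAt_id x).sub_const θ
  have hfin := hid.sub (harc.const_mul (2:ℝ))
  refine hfin.congr_deriv ?_
  symm
  simp only [Pi.div_apply]
  have hP : Real.sin (θ - x)^2 + Real.cos (θ - x)^2 = 1 := Real.sin_sq_add_cos_sq (θ - x)
  set s := Real.sin (θ - x) with hs
  set cc := Real.cos (θ - x) with hc
  unfold K
  field_simp
  rw [div_eq_iff (ne_of_gt (by linarith))]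
  linear_combination (r^2*(1 - r^2 + (1 - 2*r*cc + r^2))) * hP

set_option maxHeartbeats 1000000 in
lemma key_identity (θs c ρ θt φ r θ : ℝ)
    (hθs0 : 0 < θs) (hθsπ : θs < π) (hθt0 : 0 < θt) (hθtπ : θt < π) (hle : θs ≤ θt)
    (hx : Real.cos θs = c + ρ * Real.cos θt)
    (hy : Real.sin θs = ρ * Real.sin θt)
    (hφ1 : θt < φ) (hφ2 : φ < 2*π - θt)
    (hr0 : 0 ≤ r) (hr1 : r < 1)
    (hpx : c + ρ * Real.cos φ = r * Real.cos θ)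
    (hpy : ρ * Real.sin φ = r * Real.sin θ) :
    Real.arctan (r * Real.sin (θ + θs) / (1 - r * Real.cos (θ + θs)))
      - Real.arctan (r * Real.sin (θ - θs) / (1 - r * Real.cos (θ - θs))) = θt - 2*θs := by
  have hπ : (0:ℝ) < π := Real.pi_pos
  -- basic positivity
  have hρ : 0 < ρ := by
    have h1 : 0 < Real.sin θs := Real.sin_pos_of_pos_of_lt_pi hθs0 hθsπ
    have h2 : 0 < Real.sin θt := Real.sin_pos_of_pos_of_lt_pi hθt0 hθtπ
    nlinarith
  have hs₁ : 0 < Real.sin ((φ - θt)/2) := by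
    apply Real.sin_pos_of_pos_of_lt_pi <;> nlinarith
  have hs₂ : 0 < Real.sin ((θt + φ)/2) := by
    apply Real.sin_pos_of_pos_of_lt_pi <;> nlinarith
  set s₁ := Real.sin ((φ - θt)/2) with hs₁def
  set s₂ := Real.sin ((θt + φ)/2) with hs₂def
  set D₁ := 1 - r * Real.cos (θ + θs) with hD₁def
  set D₂ := 1 - r * Real.cos (θ - θs) with hD₂def
  have hD₁ : 0 < D₁ := oneSub_pos hr0 hr1 _
  have hD₂ : 0 < D₂ := oneSub_pos hr0 hr1 _
  set A₁ := r * Real.sin (θ + θs) / D₁ with hA₁def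
  set A₂ := r * Real.sin (θ - θs) / D₂ with hA₂def
  set a₁ := Real.arctan A₁ with ha₁def
  set a₂ := Real.arctan A₂ with ha₂def
  set s₁' := Real.sqrt (1 + A₁^2) with hs₁'def
  set s₂' := Real.sqrt (1 + A₂^2) with hs₂'def
  have hs₁' : 0 < s₁' := Real.sqrt_pos.2 (by positivity)
  have hs₂' : 0 < s₂' := Real.sqrt_pos.2 (by positivity)
  have hA₁D : A₁ * D₁ = r * Real.sin (θ + θs) := by
    rw [hA₁def]; field_simp
  have hA₂D : A₂ * D₂ = r * Real.sin (θ - θs) := by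
    rw [hA₂def]; field_simp
  set X := θs + (a₁ - a₂) with hXdef
  -- complex facts
  have ha1 : myE a₁ * ↑s₁' = 1 + ↑A₁ * Complex.I := myE_arctan A₁
  have ha2 : myE (-a₂) * ↑s₂' = 1 - ↑A₂ * Complex.I := by
    have h := myE_arctan (-A₂)
    rw [Real.arctan_neg, neg_sq] at h
    rw [← hs₂'def, ← ha₂def] at h
    rw [h]
    push_cast
    ring
  have hb1 : (1 + ↑A₁ * Complex.I) * ↑D₁ = 1 - ↑r * myE (-(θ + θs)) := by
    apply Complex.ext <;>
      simp only [Complex.add_re, Complex.add_im, Complex.mul_re, Complex.mul_im,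
      Complex.sub_re, Complex.sub_im, Complex.one_re, Complex.one_im,
      Complex.ofReal_re, Complex.ofReal_im, Complex.I_re, Complex.I_im,
      myE_re, myE_im, Real.cos_neg, Real.sin_neg]
    · rw [hD₁def]; ring
    · linear_combination hA₁D
  have hb2 : (1 - ↑A₂ * Complex.I) * ↑D₂ = 1 - ↑r * myE (θ - θs) := by
    apply Complex.ext <;>
      simp only [Complex.add_re, Complex.add_im, Complex.mul_re, Complex.mul_im,
      Complex.sub_re, Complex.sub_im, Complex.one_re, Complex.one_im,
      Complex.ofReal_re, Complex.ofReal_im, Complex.I_re, Complex.I_im,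
      myE_re, myE_im, Real.cos_neg, Real.sin_neg]
    · rw [hD₂def]; ring
    · linear_combination -hA₂D
  have hp : (↑r : ℂ) * myE θ = ↑c + ↑ρ * myE φ := by
    apply Complex.ext <;>
      simp only [Complex.add_re, Complex.add_im, Complex.mul_re, Complex.mul_im,
      Complex.sub_re, Complex.sub_im, Complex.one_re, Complex.one_im,
      Complex.ofReal_re, Complex.ofReal_im, Complex.I_re, Complex.I_im,
      myE_re, myE_im, Real.cos_neg, Real.sin_neg]
    · linear_combination -hpx
    · linear_combination -hpy
  have hpb : (↑r : ℂ) * myE (-θ) = ↑c + ↑ρ * myE (-φ) := by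
    apply Complex.ext <;>
      simp only [Complex.add_re, Complex.add_im, Complex.mul_re, Complex.mul_im,
      Complex.sub_re, Complex.sub_im, Complex.one_re, Complex.one_im,
      Complex.ofReal_re, Complex.ofReal_im, Complex.I_re, Complex.I_im,
      myE_re, myE_im, Real.cos_neg, Real.sin_neg]
    · linear_combination -hpx
    · linear_combination hpy
  have hz : myE θs = ↑c + ↑ρ * myE θt := by
    apply Complex.ext <;>
      simp only [Complex.add_re, Complex.add_im, Complex.mul_re, Complex.mul_im,
      Complex.sub_re, Complex.sub_im, Complex.one_re, Complex.one_im,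
      Complex.ofReal_re, Complex.ofReal_im, Complex.I_re, Complex.I_im,
      myE_re, myE_im, Real.cos_neg, Real.sin_neg]
    · linear_combination hx
    · linear_combination hy
  have hq1 : (↑r : ℂ) * myE (-(θ + θs)) = (↑c + ↑ρ * myE (-φ)) * myE (-θs) := by
    rw [show -(θ + θs) = -θ + -θs by ring, myE_add, ← mul_assoc, hpb]
  have hq2 : (↑r : ℂ) * myE (θ - θs) = (↑c + ↑ρ * myE φ) * myE (-θs) := by
    rw [show θ - θs = θ + -θs by ring, myE_add, ← mul_assoc, hp]
  have hunit : myE θs * myE (-θs) = 1 := myE_unit θs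
  have d1 : myE θt - myE (-φ) = 2 * ↑s₂ * Complex.I * myE ((θt - φ)/2) := by
    have h := myE_sub_myE θt (-φ)
    rw [show (θt - -φ)/2 = (θt + φ)/2 by ring, show (θt + -φ)/2 = (θt - φ)/2 by ring] at h
    rw [h, hs₂def]
  have d2 : myE θt - myE φ = 2 * ↑(-s₁) * Complex.I * myE ((θt + φ)/2) := by
    have h := myE_sub_myE θt φ
    rw [show (θt - φ)/2 = -((φ - θt)/2) by ring, Real.sin_neg] at h
    rw [h, hs₁def]
  have hE : myE (-θs) * (myE ((θt - φ)/2) * myE ((θt + φ)/2)) = myE (θt - θs) := by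
    rw [← myE_add, ← myE_add]
    congr 1
    ring
  -- the main computation
  have hsplit : myE X = myE θs * myE a₁ * myE (-a₂) := by
    rw [hXdef, show θs + (a₁ - a₂) = θs + (a₁ + -a₂) by ring, myE_add, myE_add, mul_assoc]
  have hMain : myE X * ↑(s₁' * D₁ * (s₂' * D₂)) = ((4*ρ^2*s₁*s₂ : ℝ) : ℂ) * myE (θt - θs) := by
    calc myE X * ↑(s₁' * D₁ * (s₂' * D₂))
        = myE θs * ((myE a₁ * ↑s₁') * ↑D₁) * ((myE (-a₂) * ↑s₂') * ↑D₂) := by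
          rw [hsplit]; push_cast; ring
      _ = myE θs * ((1 + ↑A₁ * Complex.I) * ↑D₁) * ((1 - ↑A₂ * Complex.I) * ↑D₂) := by
          rw [ha1, ha2]
      _ = myE θs * (1 - ↑r * myE (-(θ + θs))) * (1 - ↑r * myE (θ - θs)) := by
          rw [hb1, hb2]
      _ = myE θs * (1 - (↑c + ↑ρ * myE (-φ)) * myE (-θs)) * (1 - (↑c + ↑ρ * myE φ) * myE (-θs)) := by
          rw [hq1, hq2]
      _ = (myE θs - (↑c + ↑ρ * myE (-φ)) * (myE θs * myE (-θs))) * (1 - (↑c + ↑ρ * myE φ) * myE (-θs)) := by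
          ring
      _ = (myE θs - (↑c + ↑ρ * myE (-φ))) * (1 - (↑c + ↑ρ * myE φ) * myE (-θs)) := by
          rw [hunit]; ring
      _ = (↑ρ * (myE θt - myE (-φ))) * (1 - (↑c + ↑ρ * myE φ) * myE (-θs)) := by
          rw [hz]; ring
      _ = (↑ρ * (myE θt - myE (-φ))) * (myE (-θs) * (myE θs - (↑c + ↑ρ * myE φ)) + (1 - myE θs * myE (-θs))) := by
          ring
      _ = (↑ρ * (myE θt - myE (-φ))) * (myE (-θs) * (↑ρ * (myE θt - myE φ))) := by
          rw [hunit, hz]; ring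
      _ = (↑ρ * (2 * ↑s₂ * Complex.I * myE ((θt - φ)/2))) * (myE (-θs) * (↑ρ * (2 * ↑(-s₁) * Complex.I * myE ((θt + φ)/2)))) := by
          rw [d1, d2]
      _ = (4*(↑s₁:ℂ)*↑s₂*↑ρ*↑ρ) * (myE (-θs) * (myE ((θt - φ)/2) * myE ((θt + φ)/2))) := by
          push_cast
          linear_combination (-(4*(↑s₁:ℂ)*↑s₂*↑ρ*↑ρ) * (myE (-θs) * (myE ((θt - φ)/2) * myE ((θt + φ)/2)))) * Complex.I_mul_I
      _ = (4*(↑s₁:ℂ)*↑s₂*↑ρ*↑ρ) * myE (θt - θs) := by rw [hE]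
      _ = ((4*ρ^2*s₁*s₂ : ℝ) : ℂ) * myE (θt - θs) := by push_cast; ring
  -- take absolute values to identify the positive constants
  have hC₁ : (0:ℝ) < s₁' * D₁ * (s₂' * D₂) := by positivity
  have hC₂ : (0:ℝ) < 4*ρ^2*s₁*s₂ := by positivity
  have habs : s₁' * D₁ * (s₂' * D₂) = 4*ρ^2*s₁*s₂ := by
    have h := congrArg (norm : ℂ → ℝ) hMain
    rw [norm_mul, norm_mul, myE_abs, myE_abs, Complex.norm_real, Complex.norm_real,
      Real.norm_eq_abs, Real.norm_eq_abs,
      abs_of_pos hC₁, abs_of_pos hC₂] at h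
    linarith
  have hexp : myE X = myE (θt - θs) := by
    have h : myE X * ↑(s₁' * D₁ * (s₂' * D₂)) = myE (θt - θs) * ↑(s₁' * D₁ * (s₂' * D₂)) := by
      rw [hMain, habs]; ring
    exact mul_right_cancel₀ (by exact_mod_cast ne_of_gt hC₁) h
  -- conclude X = θt - θs
  rw [myE, myE, Complex.exp_eq_exp_iff_exists_int] at hexp
  obtain ⟨n, hn⟩ := hexp
  have hXr : X = (θt - θs) + n * (2 * π) := by
    have h2 : (↑X : ℂ) * Complex.I = (↑((θt - θs) + n * (2 * π)) : ℂ) * Complex.I := by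
      rw [hn]; push_cast; ring
    have h3 : (↑X : ℂ) = ↑((θt - θs) + n * (2 * π)) :=
      mul_right_cancel₀ Complex.I_ne_zero h2
    exact_mod_cast h3
  have ha₁b₁ : -(π/2) < a₁ := by
    have := Real.neg_pi_div_two_lt_arctan A₁; rw [← ha₁def] at this; linarith
  have ha₁b₂ : a₁ < π/2 := by
    have := Real.arctan_lt_pi_div_two A₁; rw [← ha₁def] at this; linarith
  have ha₂b₁ : -(π/2) < a₂ := by
    have := Real.neg_pi_div_two_lt_arctan A₂; rw [← ha₂def] at this; linarith
  have ha₂b₂ : a₂ < π/2 := by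
    have := Real.arctan_lt_pi_div_two A₂; rw [← ha₂def] at this; linarith
  have hn0 : n = 0 := by
    have hb1 : (n:ℝ) * (2 * π) < 2 * π := by
      have : X - (θt - θs) < 2 * π := by rw [hXdef]; linarith
      linarith [hXr]
    have hb2 : -(2 * π) < (n:ℝ) * (2 * π) := by
      have : -(2 * π) < X - (θt - θs) := by rw [hXdef]; linarith
      linarith [hXr]
    have h1 : (n:ℝ) < 1 := by nlinarith
    have h2 : (-1:ℝ) < n := by nlinarith
    have hA : n < 1 := by exact_mod_cast h1
    have hB : (-1:ℤ) < n := by exact_mod_cast h2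
    omega
  rw [hn0] at hXr
  rw [hXdef] at hXr
  rw [ha₁def, ha₂def, hA₁def, hA₂def, hD₁def, hD₂def] at hXr
  push_cast at hXr
  linarith

end PoissonAux

theorem stmt4 (θs : ℝ) (hθs : θs ∈ Set.Ioo 0 π)
    (c ρ θt : ℝ) (hρ : 0 ≤ ρ) (hθt : θt ∈ Set.Ioo 0 π) (hle : θs ≤ θt)
    -- z₁ = (cos θ*, sin θ*) = M + ρ (cos θ̃*, sin θ̃*) with M = (c,0)
    (hx : Real.cos θs = c + ρ * Real.cos θt)
    (hy : Real.sin θs = ρ * Real.sin θt)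
    (φ : ℝ) (hφ : φ ∈ Set.Ioo θt (2*π - θt))
    -- p = M + ρ (cos φ, sin φ) = (r cos θ, r sin θ) with 0 ≤ r < 1 (i.e. |p| < 1)
    (r θ : ℝ) (hr0 : 0 ≤ r) (hr1 : r < 1)
    (hpx : c + ρ * Real.cos φ = r * Real.cos θ)
    (hpy : ρ * Real.sin φ = r * Real.sin θ) :
    (1/(2*π)) * ∫ θ' in (-θs)..θs, K (θ - θ') r = (θt - θs)/π := by
  obtain ⟨hθs0, hθsπ⟩ := hθs
  obtain ⟨hθt0, hθtπ⟩ := hθt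
  obtain ⟨hφ1, hφ2⟩ := hφ
  have hπ : (0:ℝ) < π := Real.pi_pos
  -- evaluate the integral via the fundamental theorem of calculus
  have hcont : Continuous fun y : ℝ => K (θ - y) r := by
    apply Continuous.div
    · continuity
    · continuity
    · intro y
      exact ne_of_gt (PoissonAux.denom_pos hr0 hr1 (θ - y))
  have hint : IntervalIntegrable (fun y : ℝ => K (θ - y) r) volume (-θs) θs :=
    hcont.intervalIntegrable _ _
  have hFTC := intervalIntegral.integral_eq_sub_of_hasDerivAt
    (f := fun y => (y - θ) - 2 * Real.arctan (r * Real.sin (θ - y) / (1 - r * Real.cos (θ - y))))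
    (fun y _ => PoissonAux.poisson_hasDerivAt r θ hr0 hr1 y) hint
  rw [hFTC]
  have hkey := PoissonAux.key_identity θs c ρ θt φ r θ hθs0 hθsπ hθt0 hθtπ hle hx hy hφ1 hφ2
    hr0 hr1 hpx hpy
  beta_reduce
  rw [show θ - -θs = θ + θs by ring]
  have h2 : (θs - θ - 2 * Real.arctan (r * Real.sin (θ - θs) / (1 - r * Real.cos (θ - θs)))) -
      (-θs - θ - 2 * Real.arctan (r * Real.sin (θ + θs) / (1 - r * Real.cos (θ + θs))))
      = 2 * (θt - θs) := by linarith [hkey]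
  rw [h2]
  field_simp
end

section
/- For every real x ≥ 5/2 and every real y with ln(4x)/x ≤ y < 1, one has y − 4(1−y)^x ≥ 0. (In particular ln(4x)/x < 1 for x ≥ 5/2, so the range of admissible y is nonempty.) -/
open Real

theorem stmt8 (x : ℝ) (hx : 5/2 ≤ x) :
    Real.log (4*x) / x < 1 ∧
    ∀ y : ℝ, Real.log (4*x) / x ≤ y → y < 1 → y - 4*(1-y)^x ≥ 0 := by
  have hxpos : (0:ℝ) < x := by linarith
  have h4x : (0:ℝ) < 4*x := by linarith
  have he : Real.exp 1 < 2.7182818286 := Real.exp_one_lt_d9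
  have he' : 2.7182818283 < Real.exp 1 := Real.exp_one_gt_d9
  -- log(4x) > 1
  have hlog1 : 1 < Real.log (4*x) := by
    rw [Real.lt_log_iff_exp_lt h4x]
    linarith
  -- log(4x) < x
  have hlogx : Real.log (4*x) < x := by
    have h2 : Real.log (4*x) = 2 + Real.log (4*x / Real.exp 2) := by
      rw [Real.log_div (by positivity) (Real.exp_ne_zero 2), Real.log_exp]
      ring
    have h3 : Real.log (4*x / Real.exp 2) ≤ 4*x / Real.exp 2 - 1 :=
      Real.log_le_sub_one_of_pos (by positivity)
    have hepos : (0:ℝ) < Real.exp 1 := Real.exp_pos 1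
    have he2 : Real.exp 2 = Real.exp 1 * Real.exp 1 := by
      rw [← Real.exp_add]; norm_num
    have he2gt : (7:ℝ) < Real.exp 2 := by nlinarith
    have hdiv : 4*x / Real.exp 2 < 4*x / 7 :=
      div_lt_div_of_pos_left (by linarith) (by norm_num) he2gt
    have : 4*x/7 + 1 < x := by nlinarith
    linarith
  constructor
  · rw [div_lt_one hxpos]; exact hlogx
  · intro y hy hy1
    have h1y : 0 < 1 - y := by linarith
    have hyx : Real.log (4*x) ≤ y * x := by
      rw [div_le_iff₀ hxpos] at hy; linarith
    have hb : 1 - y ≤ Real.exp (-y) := by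
      have := Real.add_one_le_exp (-y); linarith
    have hr : (1-y)^x ≤ (Real.exp (-y))^x :=
      Real.rpow_le_rpow (le_of_lt h1y) hb (le_of_lt hxpos)
    have hr2 : (Real.exp (-y))^x = Real.exp (-(y*x)) := by
      rw [← Real.exp_mul]; ring_nf
    have hr3 : Real.exp (-(y*x)) ≤ Real.exp (-(Real.log (4*x))) := by
      apply Real.exp_le_exp.mpr; linarith
    have hr4 : Real.exp (-(Real.log (4*x))) = 1/(4*x) := by
      rw [Real.exp_neg, Real.exp_log h4x]; ring
    have hyge : 1/x ≤ y := by
      rw [div_le_iff₀ hxpos]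
      have : 1/x ≤ Real.log (4*x)/x := by
        gcongr
        all_goals linarith
      calc 1 = (1/x) * x := by field_simp
        _ ≤ y * x := by nlinarith [le_trans this hy]
    have : 4*(1-y)^x ≤ 1/x := by
      rw [hr2] at hr
      have := le_trans hr (le_trans hr3 (le_of_eq hr4))
      rw [show 1/(4*x) = (1/x)/4 by ring] at this
      linarith
    linarith
end

section
/- For every integer N ≥ 4, setting α(N) = 2 ln(2(N+1))/(N+1) and r_N* = (1 − α(N))^{1/2}, one has (2/π) ∫₀^{r_N*} s^N/(1−s) ds ≤ (1/π) · ln(2/α(N)) / (1 − α(N))^{1/2} · 1/(N+1). -/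
open Real MeasureTheory

theorem stmt14 (N : ℕ) (hN : 4 ≤ N) :
    (2/π) * ∫ s in (0:ℝ)..(Real.sqrt (1 - 2*Real.log (2*(N+1))/(N+1))), s^N/(1-s) ≤
      (1/π) * (Real.log (2/(2*Real.log (2*(N+1))/(N+1))) /
        Real.sqrt (1 - 2*Real.log (2*(N+1))/(N+1))) * (1/(N+1)) := by
  have hM5 : (5:ℝ) ≤ (N:ℝ) + 1 := by
    have : (4:ℝ) ≤ (N:ℝ) := by exact_mod_cast hN
    linarith
  set M : ℝ := (N:ℝ) + 1 with hMdef
  have hM0 : (0:ℝ) < M := by linarith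
  set a : ℝ := 2 * Real.log (2*M) / M with hadef
  -- log 10 < 2.5
  have hlog10 : Real.log 10 < 2.5 := by
    have h100 : (100:ℝ) < Real.exp 5 := by
      have h := Real.exp_one_gt_d9
      calc (100:ℝ) < 2.7182818283^5 := by norm_num
        _ < (Real.exp 1)^5 := by
            apply pow_lt_pow_left₀ h (by norm_num)
            norm_num
        _ = Real.exp 5 := by rw [Real.exp_one_pow]; norm_num
    have h2 : Real.log 100 < 5 := (Real.log_lt_iff_lt_exp (by norm_num)).2 (by simpa using h100)
    have h3 : Real.log 100 = 2 * Real.log 10 := by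
      rw [show (100:ℝ) = 10^2 by norm_num, Real.log_pow]; push_cast; ring
    linarith [h3 ▸ h2]
  have ha0 : 0 < a := by
    apply div_pos _ hM0
    have h := Real.log_pos (show (1:ℝ) < 2*M by linarith)
    linarith
  have hlogM : Real.log (2*M) < 2.5 + (M/5 - 1) := by
    have h1 : Real.log (2*M) = Real.log 10 + Real.log (M/5) := by
      rw [← Real.log_mul (by norm_num) (by positivity)]
      ring_nf
    have h2 : Real.log (M/5) ≤ M/5 - 1 := Real.log_le_sub_one_of_pos (by positivity)
    linarith
  have ha1 : a < 1 := by
    rw [hadef, div_lt_one hM0]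
    nlinarith
  set r : ℝ := Real.sqrt (1 - a) with hrdef
  have hr2 : r^2 = 1 - a := Real.sq_sqrt (by linarith)
  have hr0 : 0 < r := Real.sqrt_pos.2 (by linarith)
  have hr1 : r < 1 := by
    nlinarith
  -- 1 - r ≥ a/2
  have h1r : a/2 ≤ 1 - r := by nlinarith
  -- r ≤ exp(-a/2)
  have hrexp : r ≤ Real.exp (-a/2) := by
    rw [hrdef, show (-a/2 : ℝ) = -a/2 by rfl]
    have h1 : (1 - a : ℝ) ≤ Real.exp (-a) := by
      have := Real.add_one_le_exp (-a); linarith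
    calc Real.sqrt (1-a) ≤ Real.sqrt (Real.exp (-a)) := Real.sqrt_le_sqrt h1
      _ = Real.exp (-a/2) := by rw [← Real.exp_half]
  -- r^(N+1) ≤ 1/(2M)
  have hrpow : r^(N+1) ≤ 1/(2*M) := by
    have h1 : r^(N+1) ≤ Real.exp (-a/2)^(N+1) :=
      pow_le_pow_left₀ hr0.le hrexp _
    have h2 : Real.exp (-a/2)^(N+1) = Real.exp (-a/2 * M) := by
      rw [← Real.exp_nat_mul]
      congr 1
      rw [hMdef]; push_cast; ring
    have h3 : -a/2 * M = - Real.log (2*M) := by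
      rw [hadef]; field_simp
    rw [h2, h3, Real.exp_neg, Real.exp_log (by linarith)] at h1
    simpa [one_div] using h1
  have hrN : r^N ≤ 1/(2*M*r) := by
    rw [le_div_iff₀ (by positivity)]
    calc r^N * (2*M*r) = (r^(N+1)) * (2*M) := by ring
      _ ≤ (1/(2*M)) * (2*M) := by
          apply mul_le_mul_of_nonneg_right hrpow (by positivity)
      _ = 1 := by field_simp
  -- integral bound
  have hint1 : IntervalIntegrable (fun s => s^N/(1-s)) volume 0 r := by
    apply ContinuousOn.intervalIntegrable
    apply ContinuousOn.div (by fun_prop) (by fun_prop)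
    intro s hs
    rw [Set.uIcc_of_le hr0.le] at hs
    have := hs.2
    intro h; nlinarith [hs.1]
  have hint2 : IntervalIntegrable (fun s => r^N/(1-s)) volume 0 r := by
    apply ContinuousOn.intervalIntegrable
    apply ContinuousOn.div (by fun_prop) (by fun_prop)
    intro s hs
    rw [Set.uIcc_of_le hr0.le] at hs
    intro h; nlinarith [hs.1, hs.2]
  have hmono : (∫ s in (0:ℝ)..r, s^N/(1-s)) ≤ ∫ s in (0:ℝ)..r, r^N/(1-s) := by
    apply intervalIntegral.integral_mono_on hr0.le hint1 hint2
    intro s hs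
    have hs0 := hs.1
    have hsr := hs.2
    have hden : 0 < 1 - s := by linarith
    have hnum : s^N ≤ r^N := pow_le_pow_left₀ hs0 hsr N
    gcongr
  -- compute the majorant integral
  have hcomp : (∫ s in (0:ℝ)..r, r^N/(1-s)) = r^N * Real.log ((1-0)/(1-r)) := by
    have heq : (fun s:ℝ => r^N/(1-s)) = fun s => r^N * (1-s)⁻¹ := by
      funext s; rw [div_eq_mul_inv]
    rw [heq, intervalIntegral.integral_const_mul]
    congr 1
    rw [intervalIntegral.integral_comp_sub_left (fun x : ℝ => x⁻¹) 1]
    rw [integral_inv (Set.notMem_uIcc_of_lt (by linarith) (by linarith))]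
  have hlogbound : Real.log ((1-0)/(1-r)) ≤ Real.log (2/a) := by
    apply Real.log_le_log (div_pos (by norm_num) (by linarith))
    rw [div_le_div_iff₀ (by linarith) ha0]
    nlinarith
  have hlogpos : 0 ≤ Real.log (2/a) := by
    apply Real.log_nonneg
    rw [le_div_iff₀ ha0]; linarith
  have hfinal : (∫ s in (0:ℝ)..r, s^N/(1-s)) ≤ (1/(2*M*r)) * Real.log (2/a) := by
    calc (∫ s in (0:ℝ)..r, s^N/(1-s)) ≤ r^N * Real.log ((1-0)/(1-r)) := by
          rw [← hcomp]; exact hmono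
      _ ≤ r^N * Real.log (2/a) :=
          mul_le_mul_of_nonneg_left hlogbound (pow_nonneg hr0.le N)
      _ ≤ (1/(2*M*r)) * Real.log (2/a) :=
          mul_le_mul_of_nonneg_right hrN hlogpos
  have hπ : 0 < π := Real.pi_pos
  calc (2/π) * ∫ s in (0:ℝ)..r, s^N/(1-s)
      ≤ (2/π) * ((1/(2*M*r)) * Real.log (2/a)) :=
        mul_le_mul_of_nonneg_left hfinal (by positivity)
    _ = (1/π) * (Real.log (2/a) / r) * (1/M) := by
        field_simp
end
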